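/- arXiv:hep-th/0112198 — 4 statements merged into one kernel-verified Lean document; each statement's English description precedes it below -/
import Mathlib

section
/- Fix j ∈ ℂ, ε ∈ {0,1}, and real numbers α, β, γ, δ with αδ + βγ = 1. For u ∈ ℂ let σ(u) = sgn(u + conj u) and let |u + conj u|^{2j} denote the complex power of the nonnegative real |u + conj u| (interpreted as 0 on the null set where u + conj u = 0). Let G : ℂ → ℂ be measurable with ∫_ℂ |u + conj u|^{2 Re j} |G(u)| dA(u) < ∞, where dA is Lebesgue measure on ℂ. Then the function u ↦ |u + conj u|^{2j} σ(u)^ε · |iβu + δ|^{−4j−4} · G((αu + iγ)/(iβu + δ)) is integrable on ℂ and ∫_ℂ |u + conj u|^{2j} σ(u)^ε |iβu + δ|^{−4j−4} G((αu + iγ)/(iβu + δ)) dA(u) = ∫_ℂ |u + conj u|^{2j} σ(u)^ε G(u) dA(u). -/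
open Complex MeasureTheory

lemma my_det_aux (c : ℂ) :
    ((((1 : ℂ →L[ℂ] ℂ).smulRight c).restrictScalars ℝ)).det = Complex.normSq c := by
  have h : ((((1 : ℂ →L[ℂ] ℂ).smulRight c).restrictScalars ℝ) : ℂ →ₗ[ℝ] ℂ)
      = Algebra.lmul ℝ ℂ c := by
    ext x
    simp [mul_comm]
  rw [ContinuousLinearMap.det, h, ← Algebra.norm_apply, Algebra.norm_complex_apply]

lemma my_measurable_cpow_const (w : ℂ) : Measurable fun x : ℂ => x ^ w := by
  have h : (fun x : ℂ => x ^ w)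
      = fun x => if x = 0 then (if w = 0 then 1 else 0) else Complex.exp (Complex.log x * w) := by
    funext x; rw [Complex.cpow_def]
  rw [h]
  exact Measurable.ite (MeasurableSet.singleton 0) measurable_const
    (Complex.measurable_exp.comp (Complex.measurable_log.mul_const w))

lemma my_measurable_sign : Measurable Real.sign := by
  have h : Real.sign = fun r : ℝ => if r < 0 then (-1:ℝ) else if 0 < r then 1 else 0 := by
    funext r; rfl
  rw [h]
  exact Measurable.ite measurableSet_Iio measurable_const
    (Measurable.ite measurableSet_Ioi measurable_const measurable_const)

lemma my_sign_div_pos (x c : ℝ) (hc : 0 < c) : Real.sign (x / c) = Real.sign x := by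
  rcases lt_trichotomy x 0 with hx | rfl | hx
  · rw [Real.sign_of_neg hx, Real.sign_of_neg (div_neg_of_neg_of_pos hx hc)]
  · simp
  · rw [Real.sign_of_pos hx, Real.sign_of_pos (div_pos hx hc)]

lemma my_im_axis_null : volume {u : ℂ | u.re = 0} = 0 := by
  have h : {u : ℂ | u.re = 0} ⊆ (Submodule.span ℝ {Complex.I} : Submodule ℝ ℂ) := by
    intro u hu
    have : u = u.im • Complex.I := by
      apply Complex.ext <;> simp [Set.mem_setOf_eq.mp hu]
    rw [this]
    exact Submodule.smul_mem _ _ (Submodule.subset_span rfl)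
  refine measure_mono_null h (Measure.addHaar_submodule _ _ ?_)
  intro hT
  have h1 : (1 : ℂ) ∈ (Submodule.span ℝ {Complex.I} : Submodule ℝ ℂ) := by rw [hT]; trivial
  obtain ⟨r, hr⟩ := Submodule.mem_span_singleton.mp h1
  have := congrArg Complex.re hr
  simp at this

lemma my_ae_re_ne : ∀ᵐ u : ℂ, u.re ≠ 0 := by
  rw [ae_iff]
  convert my_im_axis_null using 2
  ext u
  simp

lemma my_key_calc (a b : ℝ) (ha : 0 < a) (hb : 0 < b) (j : ℂ) :
    (((b ^ 4)⁻¹ : ℝ) : ℂ) * (((a / b ^ 2 : ℝ) : ℂ) ^ (2 * j)) =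
      ((a : ℂ) ^ (2 * j)) * ((b : ℂ) ^ (-4 * j - 4)) := by
  have hab : (0:ℝ) < a / b ^ 2 := by positivity
  have h1 : ((a / b ^ 2 : ℝ) : ℂ) ≠ 0 := by exact_mod_cast hab.ne'
  have h2 : ((a : ℝ) : ℂ) ≠ 0 := by exact_mod_cast ha.ne'
  have h3 : ((b : ℝ) : ℂ) ≠ 0 := by exact_mod_cast hb.ne'
  rw [Complex.cpow_def_of_ne_zero h1, Complex.cpow_def_of_ne_zero h2,
    Complex.cpow_def_of_ne_zero h3, ← Complex.ofReal_log hab.le,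
    ← Complex.ofReal_log ha.le, ← Complex.ofReal_log hb.le]
  have h4 : (((b ^ 4)⁻¹ : ℝ) : ℂ) = Complex.exp ((-(4 * Real.log b) : ℝ) : ℂ) := by
    rw [← Complex.ofReal_exp]
    congr 1
    rw [Real.exp_neg]
    congr 1
    rw [show (4:ℝ) * Real.log b = Real.log (b ^ 4) by rw [Real.log_pow]; push_cast; ring]
    exact (Real.exp_log (by positivity)).symm
  rw [h4, ← Complex.exp_add, ← Complex.exp_add]
  congr 1
  rw [Real.log_div ha.ne' (by positivity), Real.log_pow]
  push_cast
  ring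

/-- Invariance of the distribution with kernel
`|u + ū|^{2j} sgn^ε(u + ū)` under the Möbius action
`u ↦ (αu + iγ)/(iβu + δ)` with `α β γ δ` real, `αδ + βγ = 1`. -/
theorem stmt_3 (j : ℂ) (ε : ℕ) (hε : ε = 0 ∨ ε = 1)
    (α β γ δ : ℝ) (h : α * δ + β * γ = 1)
    (G : ℂ → ℂ) (hG : Measurable G)
    (hint : Integrable (fun u : ℂ =>
      ‖u + (starRingEnd ℂ) u‖ ^ (2 * j.re) * ‖G u‖)) :
    Integrable (fun u : ℂ =>
      ((‖u + (starRingEnd ℂ) u‖ : ℂ) ^ (2 * j)) *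
        ((Real.sign ((u + (starRingEnd ℂ) u).re) : ℂ) ^ ε) *
        ((‖Complex.I * (β : ℂ) * u + (δ : ℂ)‖ : ℂ) ^ (-4 * j - 4)) *
        G (((α : ℂ) * u + Complex.I * (γ : ℂ)) / (Complex.I * (β : ℂ) * u + (δ : ℂ)))) ∧
    ∫ u : ℂ,
      ((‖u + (starRingEnd ℂ) u‖ : ℂ) ^ (2 * j)) *
        ((Real.sign ((u + (starRingEnd ℂ) u).re) : ℂ) ^ ε) *
        ((‖Complex.I * (β : ℂ) * u + (δ : ℂ)‖ : ℂ) ^ (-4 * j - 4)) *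
        G (((α : ℂ) * u + Complex.I * (γ : ℂ)) / (Complex.I * (β : ℂ) * u + (δ : ℂ))) =
    ∫ u : ℂ,
      ((‖u + (starRingEnd ℂ) u‖ : ℂ) ^ (2 * j)) *
        ((Real.sign ((u + (starRingEnd ℂ) u).re) : ℂ) ^ ε) * G u := by
  classical
  have h' : (α:ℂ) * δ + β * γ = 1 := by exact_mod_cast h
  set H : ℂ → ℂ := fun u =>
      ((‖u + (starRingEnd ℂ) u‖ : ℂ) ^ (2 * j)) *
        ((Real.sign ((u + (starRingEnd ℂ) u).re) : ℂ) ^ ε) * G u with hHdef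
  set L : ℂ → ℂ := fun u =>
      ((‖u + (starRingEnd ℂ) u‖ : ℂ) ^ (2 * j)) *
        ((Real.sign ((u + (starRingEnd ℂ) u).re) : ℂ) ^ ε) *
        ((‖Complex.I * (β : ℂ) * u + (δ : ℂ)‖ : ℂ) ^ (-4 * j - 4)) *
        G (((α : ℂ) * u + Complex.I * (γ : ℂ)) / (Complex.I * (β : ℂ) * u + (δ : ℂ))) with hLdef
  show Integrable L ∧ ∫ u, L u = ∫ u, H u
  -- abbreviations
  set f : ℂ → ℂ := fun u =>
      ((α : ℂ) * u + Complex.I * (γ : ℂ)) / (Complex.I * (β : ℂ) * u + (δ : ℂ)) with hfdef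
  set s : Set ℂ := {u : ℂ | Complex.I * (β : ℂ) * u + (δ : ℂ) ≠ 0} with hsdef
  have hs_meas : MeasurableSet s := by
    have hcl : IsClosed {u : ℂ | Complex.I * (β : ℂ) * u + (δ : ℂ) = 0} :=
      isClosed_eq (by fun_prop) continuous_const
    have : s = {u : ℂ | Complex.I * (β : ℂ) * u + (δ : ℂ) = 0}ᶜ := by
      ext u; simp [hsdef]
    rw [this]
    exact hcl.isOpen_compl.measurableSet
  have hs_null : volume sᶜ = 0 := by
    have hsub : (sᶜ : Set ℂ).Subsingleton := by
      intro u hu v hv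
      simp only [hsdef, Set.mem_compl_iff, Set.mem_setOf_eq, not_not] at hu hv
      by_cases hβ : (β:ℂ) = 0
      · exfalso
        rw [hβ] at hu
        simp only [mul_zero, zero_mul, zero_add] at hu
        have hβ' : β = 0 := by exact_mod_cast hβ
        have hδ' : δ = 0 := by exact_mod_cast hu
        rw [hβ', hδ'] at h; norm_num at h
      · have hIβ : Complex.I * (β:ℂ) ≠ 0 := mul_ne_zero Complex.I_ne_zero hβ
        have heq : Complex.I * (β:ℂ) * u = Complex.I * (β:ℂ) * v := by
          linear_combination hu - hv
        exact mul_left_cancel₀ hIβ heq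
    exact hsub.measure_zero _
  have hae_s : ∀ᵐ u : ℂ, u ∈ s := by
    rw [ae_iff]
    exact measure_mono_null (fun u hu => hu) hs_null
  have hres : volume.restrict s = volume := Measure.restrict_eq_self_of_ae_mem hae_s
  -- H is integrable
  have hmH : Measurable H := by
    apply Measurable.mul _ hG
    apply Measurable.mul
    · exact (my_measurable_cpow_const (2 * j)).comp
        (Complex.measurable_ofReal.comp
          (continuous_norm.measurable.comp (measurable_id.add continuous_star.measurable)))
    · exact ((Complex.measurable_ofReal.comp
        (my_measurable_sign.comp (Complex.measurable_re.comp
          (measurable_id.add continuous_star.measurable)))).pow_const ε)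
  have hnorm : ∀ u : ℂ, u.re ≠ 0 →
      ‖H u‖ = ‖u + (starRingEnd ℂ) u‖ ^ (2 * j.re) * ‖G u‖ := by
    intro u hre
    have hsum0 : u + (starRingEnd ℂ) u = ((2 * u.re : ℝ) : ℂ) := by
      rw [Complex.add_conj]
    have hne : u + (starRingEnd ℂ) u ≠ 0 := by
      rw [hsum0]; exact Complex.ofReal_ne_zero.mpr (mul_ne_zero two_ne_zero hre)
    have ha : 0 < ‖u + (starRingEnd ℂ) u‖ := norm_pos_iff.mpr hne
    have hrene : (u + (starRingEnd ℂ) u).re ≠ 0 := by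
      rw [hsum0]; simp only [Complex.ofReal_re]; exact mul_ne_zero two_ne_zero hre
    rw [hHdef]
    simp only [norm_mul]
    rw [Complex.norm_cpow_eq_rpow_re_of_pos ha]
    have hre2 : (2 * j).re = 2 * j.re := by simp [Complex.mul_re]
    rw [hre2]
    have hsgn : ‖((Real.sign ((u + (starRingEnd ℂ) u).re) : ℝ) : ℂ) ^ ε‖ = 1 := by
      rcases Real.sign_apply_eq_of_ne_zero _ hrene with hs1 | hs1 <;>
        rw [hs1] <;> simp
    rw [hsgn, mul_one]
  have hH : Integrable H := by
    refine hint.mono' hmH.aestronglyMeasurable ?_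
    filter_upwards [my_ae_re_ne] with u hre
    rw [hnorm u hre]
  -- the derivative
  set A : ℂ → (ℂ →L[ℝ] ℂ) := fun u =>
    ((1 : ℂ →L[ℂ] ℂ).smulRight (((Complex.I * (β:ℂ) * u + δ) ^ 2)⁻¹)).restrictScalars ℝ
    with hAdef
  have hderiv : ∀ u ∈ s, HasFDerivWithinAt f (A u) s u := by
    intro u hu
    have hu' : Complex.I * (β:ℂ) * u + δ ≠ 0 := hu
    have h1 : HasDerivAt (fun u : ℂ => (α:ℂ) * u + Complex.I * (γ:ℂ)) (α:ℂ) u := by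
      simpa using ((hasDerivAt_id u).const_mul (α:ℂ)).add_const (Complex.I * (γ:ℂ))
    have h2 : HasDerivAt (fun u : ℂ => Complex.I * (β:ℂ) * u + (δ:ℂ)) (Complex.I * β) u := by
      simpa using ((hasDerivAt_id u).const_mul (Complex.I * (β:ℂ))).add_const ((δ:ℂ))
    have h3 := h1.div h2 hu'
    have hval : ((α:ℂ) * (Complex.I * β * u + δ) - ((α:ℂ) * u + Complex.I * γ) * (Complex.I * β)) /
        (Complex.I * β * u + δ) ^ 2 = ((Complex.I * (β:ℂ) * u + δ) ^ 2)⁻¹ := by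
      rw [inv_eq_one_div]
      rw [div_eq_div_iff (pow_ne_zero 2 hu') (pow_ne_zero 2 hu')]
      ring_nf
      linear_combination ((Complex.I * β * u + δ) ^ 2) * h' -
        ((Complex.I * β * u + δ) ^ 2) * (β:ℂ) * γ * Complex.I_sq
    rw [hval] at h3
    have h4 : HasFDerivAt f
        ((1 : ℂ →L[ℂ] ℂ).smulRight (((Complex.I * (β:ℂ) * u + δ) ^ 2)⁻¹)) u :=
      hasDerivAt_iff_hasFDerivAt.mp h3
    exact ((h4.restrictScalars ℝ).hasFDerivWithinAt)
  -- injectivity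
  have hinj : Set.InjOn f s := by
    intro u hu v hv huv
    have hu' : Complex.I * (β:ℂ) * u + δ ≠ 0 := hu
    have hv' : Complex.I * (β:ℂ) * v + δ ≠ 0 := hv
    rw [hfdef] at huv
    simp only at huv
    rw [div_eq_div_iff hu' hv'] at huv
    linear_combination huv - (u - v) * h' + (β:ℂ) * γ * (u - v) * Complex.I_sq
  -- the image of s is conull
  have himg : {w : ℂ | -(Complex.I) * (β:ℂ) * w + α ≠ 0} ⊆ f '' s := by
    intro w hw
    simp only [Set.mem_setOf_eq] at hw
    have hDu : (Complex.I * (β:ℂ) *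
          ((((δ:ℂ) * w - Complex.I * γ) / (-(Complex.I) * (β:ℂ) * w + α))) + δ)
        * (-(Complex.I) * (β:ℂ) * w + α) = 1 := by
      rw [show (Complex.I * (β:ℂ) * (((δ:ℂ) * w - Complex.I * γ) / (-(Complex.I) * (β:ℂ) * w + α)) + δ)
          * (-(Complex.I) * (β:ℂ) * w + α)
          = Complex.I * (β:ℂ) * ((((δ:ℂ) * w - Complex.I * γ) / (-(Complex.I) * (β:ℂ) * w + α))
              * (-(Complex.I) * (β:ℂ) * w + α)) + (δ:ℂ) * (-(Complex.I) * (β:ℂ) * w + α) by ring,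
        div_mul_cancel₀ _ hw]
      linear_combination h' - (β:ℂ) * γ * Complex.I_sq
    have hune : Complex.I * (β:ℂ) *
        (((δ:ℂ) * w - Complex.I * γ) / (-(Complex.I) * (β:ℂ) * w + α)) + δ ≠ 0 :=
      left_ne_zero_of_mul_eq_one hDu
    refine ⟨((δ:ℂ) * w - Complex.I * γ) / (-(Complex.I) * (β:ℂ) * w + α), hune, ?_⟩
    have h5 : ((α:ℂ) * (((δ:ℂ) * w - Complex.I * γ) / (-(Complex.I) * (β:ℂ) * w + α)) + Complex.I * γ)
        * (-(Complex.I) * (β:ℂ) * w + α) = w := by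
      rw [show ((α:ℂ) * (((δ:ℂ) * w - Complex.I * γ) / (-(Complex.I) * (β:ℂ) * w + α)) + Complex.I * γ)
          * (-(Complex.I) * (β:ℂ) * w + α)
          = (α:ℂ) * ((((δ:ℂ) * w - Complex.I * γ) / (-(Complex.I) * (β:ℂ) * w + α))
              * (-(Complex.I) * (β:ℂ) * w + α)) + Complex.I * (γ:ℂ) * (-(Complex.I) * (β:ℂ) * w + α) by ring,
        div_mul_cancel₀ _ hw]
      linear_combination w * h' - (β:ℂ) * γ * w * Complex.I_sq
    rw [hfdef]
    simp only
    rw [div_eq_iff hune]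
    have h6 : Complex.I * (β:ℂ) *
        (((δ:ℂ) * w - Complex.I * γ) / (-(Complex.I) * (β:ℂ) * w + α)) + δ
        = (-(Complex.I) * (β:ℂ) * w + α)⁻¹ := eq_inv_of_mul_eq_one_left ?_
    · rw [h6]
      exact (eq_mul_inv_iff_mul_eq₀ hw).mpr h5
    · linear_combination hDu
  have himg_ae : f '' s =ᵐ[volume] (Set.univ : Set ℂ) := by
    rw [MeasureTheory.ae_eq_univ]
    refine measure_mono_null (t := {w : ℂ | -(Complex.I) * (β:ℂ) * w + α = 0})
      (fun w hw => ?_) ?_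
    · by_contra hco
      exact hw (himg hco)
    · refine Set.Subsingleton.measure_zero ?_ _
      intro u hu v hv
      simp only [Set.mem_setOf_eq] at hu hv
      by_cases hβ : (β:ℂ) = 0
      · exfalso
        rw [hβ] at hu
        simp only [mul_zero, zero_mul, zero_add] at hu
        have hβ' : β = 0 := by exact_mod_cast hβ
        have hα' : α = 0 := by exact_mod_cast hu
        rw [hβ', hα'] at h; norm_num at h
      · have hIβ : -(Complex.I) * (β:ℂ) ≠ 0 :=
          mul_ne_zero (neg_ne_zero.mpr Complex.I_ne_zero) hβ
        have heq : -(Complex.I) * (β:ℂ) * u = -(Complex.I) * (β:ℂ) * v := by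
          linear_combination hu - hv
        exact mul_left_cancel₀ hIβ heq
  -- the key pointwise identity
  have hkey : ∀ u ∈ s, u.re ≠ 0 → |(A u).det| • H (f u) = L u := by
    intro u hu hre
    have hu' : Complex.I * (β:ℂ) * u + δ ≠ 0 := hu
    have hsum0 : u + (starRingEnd ℂ) u = ((2 * u.re : ℝ) : ℂ) := by
      rw [Complex.add_conj]
    have hne : u + (starRingEnd ℂ) u ≠ 0 := by
      rw [hsum0]; exact Complex.ofReal_ne_zero.mpr (mul_ne_zero two_ne_zero hre)
    have ha : 0 < ‖u + (starRingEnd ℂ) u‖ := norm_pos_iff.mpr hne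
    have hb : 0 < ‖Complex.I * (β:ℂ) * u + δ‖ := norm_pos_iff.mpr hu'
    have hdet : (A u).det = (‖Complex.I * (β:ℂ) * u + δ‖ ^ 4)⁻¹ := by
      rw [hAdef]
      simp only
      rw [my_det_aux, map_inv₀, map_pow, Complex.normSq_eq_norm_sq]
      ring
    have hcDne : -(Complex.I) * (β:ℂ) * ((starRingEnd ℂ) u) + δ ≠ 0 := by
      intro h0
      apply hu'
      have := congrArg (starRingEnd ℂ) h0
      simpa [map_add, map_mul, Complex.conj_I, Complex.conj_ofReal, Complex.conj_conj,
        mul_comm, mul_assoc, mul_left_comm] using this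
    have hnsqpos : 0 < Complex.normSq (Complex.I * (β:ℂ) * u + δ) := Complex.normSq_pos.mpr hu'
    have hnsq : ((Complex.normSq (Complex.I * (β:ℂ) * u + δ) : ℝ) : ℂ) ≠ 0 := by
      exact_mod_cast hnsqpos.ne'
    have hnumc : (starRingEnd ℂ) ((α:ℂ) * u + Complex.I * (γ:ℂ))
        = (α:ℂ) * ((starRingEnd ℂ) u) - Complex.I * γ := by
      simp [map_add, map_mul, Complex.conj_I, Complex.conj_ofReal]
      ring
    have hdenc : (starRingEnd ℂ) (Complex.I * (β:ℂ) * u + (δ:ℂ))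
        = -(Complex.I) * (β:ℂ) * ((starRingEnd ℂ) u) + δ := by
      simp [map_add, map_mul, Complex.conj_I, Complex.conj_ofReal]
    have hcf : (starRingEnd ℂ) (f u)
        = ((α:ℂ) * ((starRingEnd ℂ) u) - Complex.I * γ)
          / (-(Complex.I) * (β:ℂ) * ((starRingEnd ℂ) u) + δ) := by
      rw [hfdef]
      simp only
      rw [map_div₀, hnumc, hdenc]
    have hfsum : f u + (starRingEnd ℂ) (f u) =
        (u + (starRingEnd ℂ) u) / ((Complex.normSq (Complex.I * (β:ℂ) * u + δ) : ℝ) : ℂ) := by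
      rw [eq_div_iff hnsq, ← Complex.mul_conj]
      have hcD2 : (starRingEnd ℂ) (Complex.I * (β:ℂ) * u + δ)
          = -(Complex.I) * (β:ℂ) * ((starRingEnd ℂ) u) + δ := hdenc
      rw [hcf, hcD2, hfdef]
      simp only
      rw [div_add_div _ _ hu' hcDne, div_mul_cancel₀ _ (mul_ne_zero hu' hcDne)]
      linear_combination (u + (starRingEnd ℂ) u) * h'
        - (β:ℂ) * γ * (u + (starRingEnd ℂ) u) * Complex.I_sq
    have habs : ‖f u + (starRingEnd ℂ) (f u)‖
        = ‖u + (starRingEnd ℂ) u‖ / ‖Complex.I * (β:ℂ) * u + δ‖ ^ 2 := by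
      rw [hfsum, norm_div, Complex.norm_real, Real.norm_of_nonneg (Complex.normSq_nonneg _),
        Complex.normSq_eq_norm_sq]
    have hsign : Real.sign ((f u + (starRingEnd ℂ) (f u)).re)
        = Real.sign ((u + (starRingEnd ℂ) u).re) := by
      rw [hfsum, Complex.div_ofReal_re]
      exact my_sign_div_pos _ _ hnsqpos
    -- assemble
    rw [hHdef, hLdef]
    simp only
    rw [hdet, _root_.abs_of_nonneg (by positivity), habs, hsign]
    rw [Complex.real_smul]
    have hk := my_key_calc (‖u + (starRingEnd ℂ) u‖)
      (‖Complex.I * (β:ℂ) * u + δ‖) ha hb j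
    push_cast only [Complex.ofReal_inv, Complex.ofReal_pow, Complex.ofReal_div] at *
    linear_combination (((Real.sign ((u + (starRingEnd ℂ) u).re) : ℝ) : ℂ) ^ ε * G (f u)) * hk
  -- change of variables
  have hint_img : IntegrableOn H (f '' s) := hH.integrableOn
  have hiff := integrableOn_image_iff_integrableOn_abs_det_fderiv_smul volume hs_meas hderiv hinj H
  have hint_s : IntegrableOn (fun u => |(A u).det| • H (f u)) s := hiff.mp hint_img
  have hae_key : (fun u => |(A u).det| • H (f u)) =ᵐ[volume.restrict s] L := by
    have h1 : ∀ᵐ u : ℂ ∂(volume.restrict s), u.re ≠ 0 := ae_restrict_of_ae my_ae_re_ne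
    have h2 : ∀ᵐ u : ℂ ∂(volume.restrict s), u ∈ s := ae_restrict_mem hs_meas
    filter_upwards [h1, h2] with u hre hus
    exact hkey u hus hre
  have hL_s : IntegrableOn L s := hint_s.congr hae_key
  have hLint : Integrable L := by
    rw [← hres]; exact hL_s
  refine ⟨hLint, ?_⟩
  calc ∫ u, L u = ∫ u in s, L u := by rw [hres]
    _ = ∫ u in s, |(A u).det| • H (f u) := (integral_congr_ae hae_key).symm
    _ = ∫ u in f '' s, H u :=
        (integral_image_eq_integral_abs_det_fderiv_smul volume hs_meas hderiv hinj H).symm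
    _ = ∫ u in (Set.univ : Set ℂ), H u := setIntegral_congr_set himg_ae
    _ = ∫ u, H u := setIntegral_univ
end

section
/- Let j ∈ ℂ with Re j > −1/2 and let n ∈ ℤ. Then ∫₀^π e^{inφ} (2 sin φ)^{2j} dφ = π e^{iπn/2} Γ(2j+1) / (Γ(1 + j + n/2) Γ(1 + j − n/2)), where (2 sin φ)^{2j} is the complex power of the positive real 2 sin φ for φ ∈ (0,π), and Γ is the complex Gamma function. -/
open Complex intervalIntegral Set MeasureTheory Real

namespace Stmt4Aux

lemma mul_cpow_pos {a b : ℝ} (ha : 0 ≤ a) (hb : 0 ≤ b) (w : ℂ) :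
    ((a*b : ℝ) : ℂ) ^ w = (a:ℂ)^w * (b:ℂ)^w := by
  rw [Complex.ofReal_mul]
  exact mul_cpow_ofReal_nonneg ha hb w

lemma sq_cpow {x : ℝ} (hx : 0 < x) (w : ℂ) :
    ((x^2 : ℝ) : ℂ) ^ w = (x:ℂ) ^ (2*w) := by
  have h0 : (x:ℂ) ≠ 0 := Complex.ofReal_ne_zero.mpr hx.ne'
  rw [sq, mul_cpow_pos hx.le hx.le, ← Complex.cpow_add _ _ h0]
  ring_nf

lemma cpow_add_one' {x : ℝ} (hx : 0 < x) (w : ℂ) :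
    (x:ℂ) ^ (w+1) = (x:ℂ)^w * (x:ℂ) := by
  have h0 : (x:ℂ) ≠ 0 := Complex.ofReal_ne_zero.mpr hx.ne'
  rw [Complex.cpow_add _ _ h0, Complex.cpow_one]

/-- the substitution map -/
noncomputable def f (φ : ℝ) : ℝ := Real.sin (φ/2) ^ 2

lemma f_hasDeriv (φ : ℝ) : HasDerivAt f (Real.sin φ / 2) φ := by
  have h1 : HasDerivAt (fun φ : ℝ => φ/2) (1/2) φ := (hasDerivAt_id φ).div_const 2
  have h2 := (Real.hasDerivAt_sin (φ/2)).comp φ h1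
  have h3 := h2.pow 2
  refine h3.congr_deriv ?_
  simp only [Nat.cast_ofNat, pow_one, Function.comp]
  rw [show Real.sin φ = Real.sin (2*(φ/2)) by ring_nf, Real.sin_two_mul]
  ring

lemma f_strictMono : StrictMonoOn f (Set.Icc 0 Real.pi) := by
  intro a ha b hb hab
  have hsa : Real.sin (a/2) < Real.sin (b/2) := by
    apply Real.strictMonoOn_sin
    · constructor <;> [linarith [ha.1, Real.pi_pos]; linarith [ha.2]]
    · constructor <;> [linarith [hb.1, Real.pi_pos]; linarith [hb.2]]
    · linarith
  have h0a : 0 ≤ Real.sin (a/2) := by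
    apply Real.sin_nonneg_of_nonneg_of_le_pi <;> [linarith [ha.1]; linarith [ha.2, Real.pi_pos]]
  unfold f
  nlinarith

lemma f_image : f '' Set.Ioo 0 Real.pi = Set.Ioo 0 1 := by
  apply Set.Subset.antisymm
  · rintro _ ⟨φ, hφ, rfl⟩
    have h1 : 0 < Real.sin (φ/2) := by
      apply Real.sin_pos_of_pos_of_lt_pi
      · linarith [hφ.1]
      · linarith [hφ.2, Real.pi_pos]
    have h2 : Real.sin (φ/2) < 1 := by
      have := f_strictMono ⟨le_of_lt hφ.1, hφ.2.le⟩ ⟨Real.pi_pos.le, le_refl _⟩ hφ.2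
      simp only [f, Real.sin_pi_div_two, one_pow] at this
      nlinarith
    refine ⟨pow_pos h1 2, ?_⟩
    show Real.sin (φ/2)^2 < 1
    nlinarith
  · have h0 : f 0 = 0 := by simp [f]
    have h1 : f Real.pi = 1 := by simp [f, Real.sin_pi_div_two]
    have hc : Continuous f := by unfold f; continuity
    have := intermediate_value_Ioo (a := (0:ℝ)) (b := Real.pi) Real.pi_pos.le hc.continuousOn
    rw [h0, h1] at this
    exact this

end Stmt4Aux

namespace Stmt4Aux

/-- beta-type integrand with the 4^s factor -/
noncomputable def g (s : ℂ) (x : ℝ) : ℂ :=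
  ((4:ℝ):ℂ)^s * ((x:ℝ):ℂ) ^ ((s+1)/2 - 1) * ((1 - x : ℝ):ℂ) ^ ((s+1)/2 - 1)

lemma half_pos {φ : ℝ} (hφ : φ ∈ Set.Ioo 0 Real.pi) :
    0 < Real.sin (φ/2) ∧ 0 < Real.cos (φ/2) := by
  constructor
  · exact Real.sin_pos_of_pos_of_lt_pi (by linarith [hφ.1]) (by linarith [hφ.2, Real.pi_pos])
  · exact Real.cos_pos_of_mem_Ioo ⟨by linarith [hφ.1, Real.pi_pos], by linarith [hφ.2]⟩

lemma key_pointwise (s : ℂ) {φ : ℝ} (hφ : φ ∈ Set.Ioo 0 Real.pi) :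
    |Real.sin φ / 2| • g s (f φ) = ((2 * Real.sin φ : ℝ):ℂ) ^ s := by
  obtain ⟨hx, hc⟩ := half_pos hφ
  set x := Real.sin (φ/2) with hxdef
  set c := Real.cos (φ/2) with hcdef
  have hsin : Real.sin φ = 2 * x * c := by
    rw [show φ = 2*(φ/2) by ring, Real.sin_two_mul]
  have habs : |Real.sin φ / 2| = x * c := by
    rw [hsin, abs_of_pos (by positivity)]; ring
  have h1mx : 1 - x^2 = c^2 := by
    have := Real.sin_sq_add_cos_sq (φ/2); nlinarith
  have hxne : (x:ℂ) ≠ 0 := Complex.ofReal_ne_zero.mpr hx.ne'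
  have hcne : (c:ℂ) ≠ 0 := Complex.ofReal_ne_zero.mpr hc.ne'
  have e1 : ((f φ : ℝ):ℂ) ^ ((s+1)/2 - 1) = (x:ℂ) ^ (s - 1) := by
    show ((x^2 : ℝ):ℂ) ^ ((s+1)/2 - 1) = _
    rw [sq_cpow hx]; congr 1; ring
  have e2 : ((1 - f φ : ℝ):ℂ) ^ ((s+1)/2 - 1) = (c:ℂ) ^ (s - 1) := by
    show ((1 - x^2 : ℝ):ℂ) ^ ((s+1)/2 - 1) = _
    rw [h1mx, sq_cpow hc]; congr 1; ring
  have e4 : ((4:ℝ):ℂ)^s = (2:ℂ)^s * (2:ℂ)^s := by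
    rw [show (4:ℝ) = 2*2 by norm_num, mul_cpow_pos (by norm_num) (by norm_num)]
    norm_num
  have e5 : ((2 * Real.sin φ : ℝ):ℂ) ^ s = (2:ℂ)^s * (2:ℂ)^s * (x:ℂ)^s * (c:ℂ)^s := by
    rw [hsin, show (2 : ℝ) * (2 * x * c) = (2*x) * (2*c) by ring,
      mul_cpow_pos (by positivity) (by positivity),
      mul_cpow_pos (by norm_num) hx.le, mul_cpow_pos (by norm_num) hc.le]
    push_cast
    ring
  rw [g, e1, e2, e4, e5, habs]
  have hxs : (x:ℂ) ^ s = (x:ℂ)^(s-1) * (x:ℂ) := by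
    rw [← cpow_add_one' hx]; congr 1; ring
  have hcs : (c:ℂ) ^ s = (c:ℂ)^(s-1) * (c:ℂ) := by
    rw [← cpow_add_one' hc]; congr 1; ring
  rw [hxs, hcs]
  push_cast [Complex.real_smul]
  ring

end Stmt4Aux

namespace Stmt4Aux

variable {s : ℂ}

lemma f_injOn : Set.InjOn f (Set.Ioo 0 Real.pi) :=
  (f_strictMono.mono Set.Ioo_subset_Icc_self).injOn

lemma integrableOn_g (hs : -1 < s.re) : IntegrableOn (g s) (Set.Ioo 0 1) volume := by
  have hu : 0 < ((s+1)/2).re := by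
    rw [show ((s+1)/2 : ℂ) = (s+1)/(2:ℝ) by norm_num, Complex.div_ofReal_re]
    simp only [Complex.add_re, Complex.one_re]
    linarith
  have hb := Complex.betaIntegral_convergent hu hu
  rw [intervalIntegrable_iff_integrableOn_Ioo_of_le zero_le_one] at hb
  refine MeasureTheory.IntegrableOn.congr_fun (hb.const_mul (((4:ℝ):ℂ)^s)) ?_ measurableSet_Ioo
  intro x hx
  simp only [g, Complex.ofReal_sub, Complex.ofReal_one, mul_assoc]

lemma integrableOn_sin (hs : -1 < s.re) :
    IntegrableOn (fun φ => ((2 * Real.sin φ : ℝ):ℂ) ^ s) (Set.Ioo 0 Real.pi) volume := by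
  have h := (integrableOn_image_iff_integrableOn_abs_deriv_smul measurableSet_Ioo
      (fun x _ => (f_hasDeriv x).hasDerivWithinAt) f_injOn (g s)).mp
      (by rw [f_image]; exact integrableOn_g hs)
  exact h.congr_fun (fun φ hφ => key_pointwise s hφ) measurableSet_Ioo

lemma intervalIntegrable_main (hs : -1 < s.re) (m : ℤ) :
    IntervalIntegrable (fun φ => Complex.exp (Complex.I * (m:ℂ) * (φ:ℂ)) *
      ((2 * Real.sin φ : ℝ):ℂ) ^ s) volume 0 Real.pi := by
  rw [intervalIntegrable_iff_integrableOn_Ioo_of_le Real.pi_pos.le]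
  apply Integrable.bdd_mul (c := 1) (integrableOn_sin hs)
  · exact (Complex.continuous_exp.comp (by continuity)).aestronglyMeasurable
  · refine ae_of_all _ (fun φ => ?_)
    rw [Complex.norm_exp]
    simp [Complex.mul_re, Complex.I_re, Complex.I_im]

lemma subst_beta (hs : -1 < s.re) :
    ∫ φ in (0:ℝ)..Real.pi, ((2 * Real.sin φ : ℝ):ℂ) ^ s
      = ((4:ℝ):ℂ)^s * Complex.betaIntegral ((s+1)/2) ((s+1)/2) := by
  rw [intervalIntegral.integral_of_le Real.pi_pos.le, integral_Ioc_eq_integral_Ioo]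
  have h1 : ∫ φ in Set.Ioo (0:ℝ) Real.pi, ((2 * Real.sin φ : ℝ):ℂ) ^ s
      = ∫ φ in Set.Ioo (0:ℝ) Real.pi, |Real.sin φ / 2| • g s (f φ) := by
    apply setIntegral_congr_fun measurableSet_Ioo
    exact fun φ hφ => (key_pointwise s hφ).symm
  rw [h1, ← integral_image_eq_integral_abs_deriv_smul measurableSet_Ioo
      (fun x _ => (f_hasDeriv x).hasDerivWithinAt) f_injOn (g s), f_image]
  rw [Complex.betaIntegral, intervalIntegral.integral_of_le zero_le_one,
    integral_Ioc_eq_integral_Ioo, ← MeasureTheory.integral_const_mul]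
  apply setIntegral_congr_fun measurableSet_Ioo
  intro x hx
  simp only [g, Complex.ofReal_sub, Complex.ofReal_one, mul_assoc]

end Stmt4Aux

namespace Stmt4Aux

lemma four_cpow (s : ℂ) : ((4:ℝ):ℂ)^s = (2:ℂ)^s * (2:ℂ)^s := by
  rw [show (4:ℝ) = 2*2 by norm_num, mul_cpow_pos (by norm_num) (by norm_num)]
  norm_num

lemma re_add_one (s : ℂ) : (s+1).re = s.re + 1 := by simp

lemma Gamma_s1_ne (hs : -1 < s.re) : Complex.Gamma (s+1) ≠ 0 :=
  Complex.Gamma_ne_zero_of_re_pos (by rw [re_add_one]; linarith)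

lemma Gamma_half_ne (hs : -1 < s.re) : Complex.Gamma (s/2+1) ≠ 0 := by
  apply Complex.Gamma_ne_zero_of_re_pos
  rw [re_add_one, show (s/2 : ℂ) = s/(2:ℝ) by norm_num, Complex.div_ofReal_re]
  linarith

lemma lemA (hs : -1 < s.re) :
    ∫ φ in (0:ℝ)..Real.pi, ((2 * Real.sin φ : ℝ):ℂ) ^ s
      = (Real.pi:ℂ) * Complex.Gamma (s+1) / Complex.Gamma (s/2+1)^2 := by
  set u := (s+1)/2 with hudef
  have hu : 0 < u.re := by
    rw [hudef, show ((s+1)/2 : ℂ) = (s+1)/(2:ℝ) by norm_num, Complex.div_ofReal_re, re_add_one]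
    linarith
  have hG1 := Gamma_s1_ne hs
  have hG2 := Gamma_half_ne hs
  have hbeta := Complex.Gamma_mul_Gamma_eq_betaIntegral hu hu
  rw [show u + u = s + 1 by rw [hudef]; ring] at hbeta
  have hB : Complex.betaIntegral u u = Complex.Gamma u ^ 2 / Complex.Gamma (s+1) := by
    rw [eq_div_iff hG1, sq]
    linear_combination hbeta.symm
  have hdup := Complex.Gamma_mul_Gamma_add_half u
  rw [show 2 * u = s + 1 by rw [hudef]; ring,
      show u + 1/2 = s/2 + 1 by rw [hudef]; ring,
      show 1 - (s+1) = -s by ring] at hdup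
  -- hdup : Γ u * Γ (s/2+1) = Γ (s+1) * 2^(-s) * √π
  have key : Complex.Gamma u ^ 2 * Complex.Gamma (s/2+1) ^ 2
      = Complex.Gamma (s+1) ^ 2 * ((2:ℂ)^(-s : ℂ)) ^ 2 * ((Real.sqrt Real.pi : ℝ):ℂ) ^ 2 := by
    linear_combination (Complex.Gamma u * Complex.Gamma (s/2+1)
      + Complex.Gamma (s+1) * (2:ℂ)^(-s : ℂ) * ((Real.sqrt Real.pi : ℝ):ℂ)) * hdup
  have hd2 : ((Real.sqrt Real.pi : ℝ):ℂ) ^ 2 = (Real.pi : ℂ) := by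
    rw [← Complex.ofReal_pow, Real.sq_sqrt Real.pi_pos.le]
  have h4 : ((4:ℝ):ℂ)^s * ((2:ℂ)^(-s : ℂ))^2 = 1 := by
    rw [four_cpow, sq, ← Complex.cpow_add _ _ two_ne_zero, ← Complex.cpow_add _ _ two_ne_zero,
      ← Complex.cpow_add _ _ two_ne_zero, show s + s + (-s + -s) = 0 by ring, Complex.cpow_zero]
  rw [subst_beta hs, hB]
  rw [mul_div_assoc']
  rw [div_eq_div_iff hG1 (pow_ne_zero 2 hG2)]
  linear_combination (((4:ℝ):ℂ)^s) * key
    + (Complex.Gamma (s+1))^2 * (((Real.sqrt Real.pi : ℝ):ℂ)^2) * h4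
    + (Complex.Gamma (s+1))^2 * hd2

end Stmt4Aux

namespace Stmt4Aux

lemma ofReal_cpow_pos {x : ℝ} (hx : 0 < x) (w : ℂ) :
    ((x:ℝ):ℂ) ^ w = Complex.exp (w * ((Real.log x : ℝ):ℂ)) := by
  rw [Complex.cpow_def_of_ne_zero (Complex.ofReal_ne_zero.mpr hx.ne'), Complex.ofReal_log hx.le,
    mul_comm]

/-- the function used for integration by parts -/
noncomputable def F (s : ℂ) (n : ℤ) (φ : ℝ) : ℂ :=
  Complex.exp (Complex.I * (n:ℂ) * (φ:ℂ)) * ((2 * Real.sin φ : ℝ):ℂ) ^ (s+1)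

noncomputable def F' (s : ℂ) (n : ℤ) (φ : ℝ) : ℂ :=
  ((n:ℂ)+s+1) * (Complex.exp (Complex.I * ((n:ℂ)+1) * (φ:ℂ)) * ((2 * Real.sin φ : ℝ):ℂ) ^ s)
  + (s+1-(n:ℂ)) * (Complex.exp (Complex.I * ((n:ℂ)-1) * (φ:ℂ)) * ((2 * Real.sin φ : ℝ):ℂ) ^ s)

lemma F_hasDeriv (s : ℂ) (n : ℤ) {φ : ℝ} (hφ : φ ∈ Set.Ioo 0 Real.pi) :
    HasDerivAt (F s n) (F' s n φ) φ := by
  have hsφ : 0 < Real.sin φ := Real.sin_pos_of_pos_of_lt_pi hφ.1 hφ.2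
  have h2s : 0 < 2 * Real.sin φ := by linarith
  -- inner function
  set u : ℝ → ℂ := fun ψ => Complex.I * (n:ℂ) * (ψ:ℂ)
      + (s+1) * ((Real.log (2 * Real.sin ψ) : ℝ):ℂ) with hudef
  have hu1 : HasDerivAt (fun ψ : ℝ => Complex.I * (n:ℂ) * (ψ:ℂ)) (Complex.I * (n:ℂ)) φ := by
    simpa using ((hasDerivAt_id ((φ:ℝ):ℂ)).const_mul (Complex.I * (n:ℂ))).comp_ofReal
  have hlog : HasDerivAt (fun ψ : ℝ => Real.log (2 * Real.sin ψ))
      (Real.cos φ / Real.sin φ) φ := by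
    have h1 : HasDerivAt (fun ψ : ℝ => 2 * Real.sin ψ) (2 * Real.cos φ) φ :=
      (Real.hasDerivAt_sin φ).const_mul 2
    have h2 := (Real.hasDerivAt_log h2s.ne').comp φ h1
    refine h2.congr_deriv ?_
    field_simp
  have hu : HasDerivAt u (Complex.I * (n:ℂ)
      + (s+1) * ((Real.cos φ / Real.sin φ : ℝ):ℂ)) φ :=
    hu1.add ((hlog.ofReal_comp).const_mul (s+1))
  have hG : HasDerivAt (fun ψ => Complex.exp (u ψ))
      (Complex.exp (u φ) * (Complex.I * (n:ℂ)
        + (s+1) * ((Real.cos φ / Real.sin φ : ℝ):ℂ))) φ := hu.cexp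
  have heq : F s n =ᶠ[nhds φ] fun ψ => Complex.exp (u ψ) := by
    filter_upwards [isOpen_Ioo.mem_nhds hφ] with ψ hψ
    have h2ψ : 0 < 2 * Real.sin ψ :=
      mul_pos two_pos (Real.sin_pos_of_pos_of_lt_pi hψ.1 hψ.2)
    rw [F, ofReal_cpow_pos h2ψ, ← Complex.exp_add, hudef]
  have hF := hG.congr_of_eventuallyEq heq
  refine hF.congr_deriv ?_
  -- now the algebraic identity for the derivative value
  set S := ((Real.sin φ : ℝ):ℂ) with hS
  set C := ((Real.cos φ : ℝ):ℂ) with hC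
  have hSne : S ≠ 0 := Complex.ofReal_ne_zero.mpr hsφ.ne'
  have hexpu : Complex.exp (u φ)
      = Complex.exp (Complex.I * (n:ℂ) * (φ:ℂ)) * ((2 * Real.sin φ : ℝ):ℂ) ^ (s+1) := by
    rw [hudef, Complex.exp_add, ofReal_cpow_pos h2s]
  have hcpow : ((2 * Real.sin φ : ℝ):ℂ) ^ (s+1) = ((2 * Real.sin φ : ℝ):ℂ) ^ s * (2 * S) := by
    rw [cpow_add_one' h2s, Complex.ofReal_mul, Complex.ofReal_ofNat]
  have hplus : Complex.exp (Complex.I * ((n:ℂ)+1) * (φ:ℂ))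
      = Complex.exp (Complex.I * (n:ℂ) * (φ:ℂ)) * (C + S * Complex.I) := by
    rw [show Complex.I * ((n:ℂ)+1) * (φ:ℂ)
        = Complex.I * (n:ℂ) * (φ:ℂ) + (φ:ℂ) * Complex.I by ring, Complex.exp_add,
      Complex.exp_mul_I, hS, hC, Complex.ofReal_cos, Complex.ofReal_sin]
  have hminus : Complex.exp (Complex.I * ((n:ℂ)-1) * (φ:ℂ))
      = Complex.exp (Complex.I * (n:ℂ) * (φ:ℂ)) * (C - S * Complex.I) := by
    rw [show Complex.I * ((n:ℂ)-1) * (φ:ℂ)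
        = Complex.I * (n:ℂ) * (φ:ℂ) + (-(φ:ℂ)) * Complex.I by ring, Complex.exp_add,
      Complex.exp_mul_I, Complex.cos_neg, Complex.sin_neg, hS, hC,
      Complex.ofReal_cos, Complex.ofReal_sin]
    ring
  rw [F', hplus, hminus, hexpu, hcpow]
  have hCdiv : ((Real.cos φ / Real.sin φ : ℝ):ℂ) = C / S := Complex.ofReal_div _ _
  rw [hCdiv]
  field_simp
  ring

lemma F_continuousOn {s : ℂ} (hs : -1 < s.re) (n : ℤ) :
    ContinuousOn (F s n) (Set.Icc 0 Real.pi) := by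
  intro φ _
  apply ContinuousAt.continuousWithinAt
  apply ContinuousAt.mul
  · exact (Complex.continuous_exp.comp (by continuity)).continuousAt
  · have h := continuousAt_ofReal_cpow (2 * Real.sin φ) (s+1)
      (Or.inl (by rw [re_add_one]; linarith))
    have hg : ContinuousAt (fun ψ : ℝ => ((2 * Real.sin ψ : ℝ), (s+1 : ℂ))) φ :=
      Continuous.continuousAt (by continuity)
    exact ContinuousAt.comp (f := fun ψ : ℝ => ((2 * Real.sin ψ : ℝ), (s+1 : ℂ)))
      (g := fun p : ℝ × ℂ => ((p.1 : ℂ) ^ p.2)) h hg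

lemma F_endpoints {s : ℂ} (hs : -1 < s.re) (n : ℤ) :
    F s n Real.pi = 0 ∧ F s n 0 = 0 := by
  have hs1 : (s + 1 : ℂ) ≠ 0 := by
    intro h
    have := congrArg Complex.re h
    rw [re_add_one] at this
    simp at this
    linarith
  constructor <;>
    simp [F, Real.sin_pi, Real.sin_zero, Complex.zero_cpow hs1]

lemma rec_identity {s : ℂ} (hs : -1 < s.re) (n : ℤ) :
    ((n:ℂ)+s+1) * (∫ φ in (0:ℝ)..Real.pi,
        Complex.exp (Complex.I * ((n:ℂ)+1) * (φ:ℂ)) * ((2 * Real.sin φ : ℝ):ℂ) ^ s)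
      + (s+1-(n:ℂ)) * (∫ φ in (0:ℝ)..Real.pi,
        Complex.exp (Complex.I * ((n:ℂ)-1) * (φ:ℂ)) * ((2 * Real.sin φ : ℝ):ℂ) ^ s) = 0 := by
  have hInt1 := intervalIntegrable_main hs (n+1)
  have hInt2 := intervalIntegrable_main hs (n-1)
  have hcast1 : (((n+1 : ℤ)):ℂ) = (n:ℂ)+1 := by push_cast; ring
  have hcast2 : (((n-1 : ℤ)):ℂ) = (n:ℂ)-1 := by push_cast; ring
  rw [hcast1] at hInt1
  rw [hcast2] at hInt2
  have hFTC : ∫ φ in (0:ℝ)..Real.pi, F' s n φ = F s n Real.pi - F s n 0 := by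
    apply intervalIntegral.integral_eq_sub_of_hasDeriv_right_of_le Real.pi_pos.le
      (F_continuousOn hs n)
      (fun φ hφ => (F_hasDeriv s n hφ).hasDerivWithinAt)
    unfold F'
    exact (hInt1.const_mul _).add (hInt2.const_mul _)
  rw [(F_endpoints hs n).1, (F_endpoints hs n).2, sub_zero] at hFTC
  rw [← hFTC]
  unfold F'
  rw [intervalIntegral.integral_add ((hInt1.const_mul _)) ((hInt2.const_mul _)),
    intervalIntegral.integral_const_mul, intervalIntegral.integral_const_mul]

end Stmt4Aux

namespace Stmt4Aux

noncomputable def SI (j : ℂ) (n : ℤ) : ℂ :=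
  ∫ φ in (0:ℝ)..Real.pi,
    Complex.exp (Complex.I * (n:ℂ) * (φ:ℂ)) * ((2 * Real.sin φ : ℝ):ℂ) ^ (2*j)

noncomputable def SR (j : ℂ) (n : ℤ) : ℂ :=
  (Real.pi : ℂ) * Complex.exp (Complex.I * (Real.pi : ℂ) * (n:ℂ) / 2) *
    Complex.Gamma (2*j+1) /
    (Complex.Gamma (1 + j + (n:ℂ)/2) * Complex.Gamma (1 + j - (n:ℂ)/2))

variable {j : ℂ}

lemma hre (hj : (-1/2 : ℝ) < j.re) : -1 < (2*j).re := by
  have : (2*j).re = 2 * j.re := by simp [Complex.mul_re]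
  rw [this]; linarith

lemma hre' (hj : (-1/2 : ℝ) < j.re) : -1 < (2*j+1).re := by
  have h := hre hj
  rw [re_add_one]; linarith

lemma base0 (hj : (-1/2 : ℝ) < j.re) : SI j 0 = SR j 0 := by
  unfold SI SR
  simp only [Int.cast_zero, mul_zero, zero_mul, Complex.exp_zero, one_mul, zero_div,
    add_zero, sub_zero, mul_one]
  rw [lemA (hre hj), show (2*j)/2 + 1 = 1+j by ring, sq]

lemma exp_neg_pi_I_int (n : ℤ) :
    Complex.exp (-(Complex.I * (Real.pi:ℂ) * (n:ℂ))) * Complex.exp (Complex.I * (Real.pi:ℂ) * (n:ℂ)) = 1 := by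
  rw [← Complex.exp_add]; simp

lemma SI_neg (n : ℤ) :
    SI j (-n) = Complex.exp (-(Complex.I * (Real.pi:ℂ) * (n:ℂ))) * SI j n := by
  unfold SI
  have key := intervalIntegral.integral_comp_sub_left
    (fun x : ℝ => Complex.exp (-(Complex.I * (Real.pi:ℂ) * (n:ℂ))) *
      (Complex.exp (Complex.I * (n:ℂ) * (x:ℂ)) * ((2 * Real.sin x : ℝ):ℂ) ^ (2*j)))
    (a := 0) (b := Real.pi) Real.pi
  simp only [sub_zero, sub_self] at key
  rw [← intervalIntegral.integral_const_mul, ← key]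
  apply intervalIntegral.integral_congr
  intro φ _
  simp only [Int.cast_neg]
  rw [Real.sin_pi_sub, ← mul_assoc, ← Complex.exp_add, Complex.ofReal_sub]
  congr 2
  ring

lemma SR_neg (n : ℤ) :
    SR j (-n) = Complex.exp (-(Complex.I * (Real.pi:ℂ) * (n:ℂ))) * SR j n := by
  unfold SR
  have he : Complex.exp (Complex.I * (Real.pi:ℂ) * ((-n : ℤ):ℂ) / 2)
      = Complex.exp (-(Complex.I * (Real.pi:ℂ) * (n:ℂ)))
        * Complex.exp (Complex.I * (Real.pi:ℂ) * (n:ℂ) / 2) := by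
    rw [← Complex.exp_add]; congr 1; push_cast; ring
  rw [he, Int.cast_neg,
    show 1 + j + (-(n:ℂ))/2 = 1 + j - (n:ℂ)/2 by ring,
    show 1 + j - (-(n:ℂ))/2 = 1 + j + (n:ℂ)/2 by ring]
  ring

end Stmt4Aux

namespace Stmt4Aux

variable {j : ℂ}

lemma ne_zero_of_re_pos' {z : ℂ} (hz : 0 < z.re) : z ≠ 0 := by
  intro h; rw [h] at hz; simp at hz

lemma re_half_add (j : ℂ) : (j + 1/2).re = j.re + 1/2 := by
  rw [show (1/2 : ℂ) = ((1/2 : ℝ):ℂ) by norm_num, Complex.add_re, Complex.ofReal_re]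

lemma exp_I_pi_half : Complex.exp (Complex.I * (Real.pi:ℂ) * ((1:ℤ):ℂ) / 2) = Complex.I := by
  rw [show Complex.I * (Real.pi:ℂ) * ((1:ℤ):ℂ) / 2 = ((Real.pi/2 : ℝ):ℂ) * Complex.I by
    push_cast; ring, Complex.exp_mul_I, ← Complex.ofReal_cos, ← Complex.ofReal_sin,
    Real.cos_pi_div_two, Real.sin_pi_div_two]
  simp

lemma base1 (hj : (-1/2 : ℝ) < j.re) : SI j 1 = SR j 1 := by
  have hs := hre hj
  have hs' := hre' hj
  have hne1 : (2*j+1 : ℂ) ≠ 0 := ne_zero_of_re_pos' (by rw [re_add_one]; linarith)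
  have hjh : (j + 1/2 : ℂ) ≠ 0 := ne_zero_of_re_pos' (by rw [re_half_add]; linarith)
  have hb : Complex.Gamma (j + 1/2) ≠ 0 :=
    Complex.Gamma_ne_zero_of_re_pos (by rw [re_half_add]; linarith)
  have hneg : SI j (-1) = -SI j 1 := by
    rw [SI_neg 1, show -(Complex.I * (Real.pi:ℂ) * ((1:ℤ):ℂ)) = -((Real.pi:ℂ) * Complex.I) by
      push_cast; ring, Complex.exp_neg, Complex.exp_pi_mul_I]
    norm_num
  have hsub : SI j 1 - SI j (-1)
      = ∫ φ in (0:ℝ)..Real.pi,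
          (Complex.exp (Complex.I * ((1:ℤ):ℂ) * (φ:ℂ)) * ((2 * Real.sin φ : ℝ):ℂ) ^ (2*j)
          - Complex.exp (Complex.I * ((-1:ℤ):ℂ) * (φ:ℂ)) * ((2 * Real.sin φ : ℝ):ℂ) ^ (2*j)) := by
    unfold SI
    rw [intervalIntegral.integral_sub (intervalIntegrable_main hs 1)
      (intervalIntegrable_main hs (-1))]
  have hptw : ∀ φ ∈ Set.uIcc (0:ℝ) Real.pi,
      (Complex.exp (Complex.I * ((1:ℤ):ℂ) * (φ:ℂ)) * ((2 * Real.sin φ : ℝ):ℂ) ^ (2*j)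
       - Complex.exp (Complex.I * ((-1:ℤ):ℂ) * (φ:ℂ)) * ((2 * Real.sin φ : ℝ):ℂ) ^ (2*j))
      = Complex.I * ((2 * Real.sin φ : ℝ):ℂ) ^ (2*j+1) := by
    intro φ hφ
    rw [Set.uIcc_of_le Real.pi_pos.le] at hφ
    have hfe : Complex.exp (Complex.I * ((1:ℤ):ℂ) * (φ:ℂ))
        = Complex.cos (φ:ℂ) + Complex.sin (φ:ℂ) * Complex.I := by
      rw [show Complex.I * ((1:ℤ):ℂ) * (φ:ℂ) = (φ:ℂ) * Complex.I by push_cast; ring,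
        Complex.exp_mul_I]
    have hfe' : Complex.exp (Complex.I * ((-1:ℤ):ℂ) * (φ:ℂ))
        = Complex.cos (φ:ℂ) - Complex.sin (φ:ℂ) * Complex.I := by
      rw [show Complex.I * ((-1:ℤ):ℂ) * (φ:ℂ) = (-(φ:ℂ)) * Complex.I by push_cast; ring,
        Complex.exp_mul_I, Complex.cos_neg, Complex.sin_neg]
      ring
    rw [hfe, hfe', ← Complex.ofReal_sin]
    by_cases hσ : Real.sin φ = 0
    · rw [hσ]
      norm_num
      exact hne1
    · have hsφ : 0 < Real.sin φ :=
        lt_of_le_of_ne (Real.sin_nonneg_of_nonneg_of_le_pi hφ.1 hφ.2) (Ne.symm hσ)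
      have h2s : 0 < 2 * Real.sin φ := by linarith
      rw [cpow_add_one' h2s, Complex.ofReal_mul, Complex.ofReal_ofNat]
      ring
  have h2 : (2:ℂ) * SI j 1 = Complex.I *
      ((Real.pi:ℂ) * Complex.Gamma ((2*j+1)+1) / Complex.Gamma ((2*j+1)/2+1)^2) := by
    rw [show (2:ℂ) * SI j 1 = SI j 1 - SI j (-1) by rw [hneg]; ring, hsub,
      intervalIntegral.integral_congr hptw, intervalIntegral.integral_const_mul,
      lemA hs']
  have hGA : Complex.Gamma ((2*j+1)+1) = (2*j+1) * Complex.Gamma (2*j+1) :=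
    Complex.Gamma_add_one _ hne1
  have hGB : Complex.Gamma ((2*j+1)/2+1) = (j+1/2) * Complex.Gamma (j+1/2) := by
    rw [show (2*j+1)/2+1 = (j+1/2)+1 by ring, Complex.Gamma_add_one _ hjh]
  have hGC : Complex.Gamma (1 + j + ((1:ℤ):ℂ)/2) = (j+1/2) * Complex.Gamma (j+1/2) := by
    rw [show 1 + j + ((1:ℤ):ℂ)/2 = (j+1/2)+1 by push_cast; ring, Complex.Gamma_add_one _ hjh]
  have hGD : Complex.Gamma (1 + j - ((1:ℤ):ℂ)/2) = Complex.Gamma (j+1/2) := by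
    rw [show 1 + j - ((1:ℤ):ℂ)/2 = j+1/2 by push_cast; ring]
  rw [hGA, hGB] at h2
  unfold SR
  rw [exp_I_pi_half, hGC, hGD]
  have hSI : SI j 1 = Complex.I *
      ((Real.pi:ℂ) * ((2*j+1) * Complex.Gamma (2*j+1)) / ((j+1/2) * Complex.Gamma (j+1/2))^2) / 2 := by
    linear_combination h2 / 2
  have hD : (((j+1/2) * Complex.Gamma (j+1/2))^2 * 2 : ℂ) ≠ 0 :=
    mul_ne_zero (pow_ne_zero _ (mul_ne_zero hjh hb)) two_ne_zero
  have hD2 : ((j+1/2) * Complex.Gamma (j+1/2) * Complex.Gamma (j+1/2) : ℂ) ≠ 0 :=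
    mul_ne_zero (mul_ne_zero hjh hb) hb
  rw [hSI, ← mul_div_assoc', div_div, mul_div_assoc', div_eq_div_iff hD hD2]
  ring

end Stmt4Aux

namespace Stmt4Aux

variable {j : ℂ}

lemma cancel_aux {c : ℂ} (X W : ℂ) (hc : c ≠ 0) : (2*c) * (X/(c*W)) = 2*(X/W) := by
  rw [← div_div, mul_div_assoc']
  congr 1
  rw [mul_assoc, mul_comm c (X/c), div_mul_cancel₀ X hc, mul_div_assoc]

lemma SR_step (hj : (-1/2 : ℝ) < j.re) (n : ℤ) (hn : 0 ≤ n) :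
    ((n:ℂ)+2*j+2) * SR j (n+2) + (2*j-(n:ℂ)) * SR j n = 0 := by
  have hnR : (0:ℝ) ≤ (n:ℝ) := Int.cast_nonneg_iff.mpr hn
  unfold SR
  rw [show (((n+2 : ℤ)):ℂ) = (n:ℂ)+2 by push_cast; ring]
  have he : Complex.exp (Complex.I * (Real.pi:ℂ) * ((n:ℂ)+2) / 2)
      = -Complex.exp (Complex.I * (Real.pi:ℂ) * (n:ℂ) / 2) := by
    rw [show Complex.I * (Real.pi:ℂ) * ((n:ℂ)+2) / 2
        = Complex.I * (Real.pi:ℂ) * (n:ℂ) / 2 + (Real.pi:ℂ) * Complex.I by ring,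
      Complex.exp_add, Complex.exp_pi_mul_I]
    ring
  have hP : (1 + j + (n:ℂ)/2 : ℂ) ≠ 0 := by
    apply ne_zero_of_re_pos'
    rw [show (1 + j + (n:ℂ)/2 : ℂ) = j + ((1+(n:ℝ)/2 : ℝ):ℂ) by push_cast; ring,
      Complex.add_re, Complex.ofReal_re]
    linarith
  have hA : Complex.Gamma (1 + j + ((n:ℂ)+2)/2)
      = (1 + j + (n:ℂ)/2) * Complex.Gamma (1 + j + (n:ℂ)/2) := by
    rw [show 1 + j + ((n:ℂ)+2)/2 = (1 + j + (n:ℂ)/2) + 1 by ring,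
      Complex.Gamma_add_one _ hP]
  rw [he, hA]
  by_cases hz : (j - (n:ℂ)/2 : ℂ) = 0
  · have hBzero : Complex.Gamma (1 + j - ((n:ℂ)+2)/2) = 0 := by
      rw [show 1 + j - ((n:ℂ)+2)/2 = j - (n:ℂ)/2 by ring, hz, Complex.Gamma_zero]
    have hcoef : 2*j - (n:ℂ) = 0 := by linear_combination 2*hz
    rw [hBzero, mul_zero, div_zero, mul_zero, zero_add, hcoef, zero_mul]
  · have hB1 : Complex.Gamma (1 + j - (n:ℂ)/2)
        = (j - (n:ℂ)/2) * Complex.Gamma (j - (n:ℂ)/2) := by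
      rw [show 1 + j - (n:ℂ)/2 = (j - (n:ℂ)/2) + 1 by ring, Complex.Gamma_add_one _ hz]
    have hB2 : Complex.Gamma (1 + j - ((n:ℂ)+2)/2) = Complex.Gamma (j - (n:ℂ)/2) := by
      rw [show 1 + j - ((n:ℂ)+2)/2 = j - (n:ℂ)/2 by ring]
    rw [hB1, hB2,
      show ((1 + j + (n:ℂ)/2) * Complex.Gamma (1 + j + (n:ℂ)/2)) * Complex.Gamma (j - (n:ℂ)/2)
        = (1 + j + (n:ℂ)/2) * (Complex.Gamma (1 + j + (n:ℂ)/2) * Complex.Gamma (j - (n:ℂ)/2))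
        by ring,
      show Complex.Gamma (1 + j + (n:ℂ)/2) * ((j - (n:ℂ)/2) * Complex.Gamma (j - (n:ℂ)/2))
        = (j - (n:ℂ)/2) * (Complex.Gamma (1 + j + (n:ℂ)/2) * Complex.Gamma (j - (n:ℂ)/2))
        by ring,
      show ((n:ℂ)+2*j+2) = 2*(1 + j + (n:ℂ)/2) by ring,
      show (2*j-(n:ℂ)) = 2*(j - (n:ℂ)/2) by ring,
      cancel_aux _ _ hP, cancel_aux _ _ hz]
    ring

lemma rec_SI (hj : (-1/2 : ℝ) < j.re) (n : ℤ) :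
    ((n:ℂ)+2*j+2) * SI j (n+2) + (2*j-(n:ℂ)) * SI j n = 0 := by
  have h := rec_identity (hre hj) (n+1)
  rw [show (((n+1 : ℤ)):ℂ)+1 = (((n+2 : ℤ)):ℂ) by push_cast; ring,
      show (((n+1 : ℤ)):ℂ)-1 = ((n:ℤ):ℂ) by push_cast; ring] at h
  unfold SI
  push_cast at h ⊢
  linear_combination h

lemma main_nonneg (hj : (-1/2 : ℝ) < j.re) : ∀ m : ℕ, SI j (m:ℤ) = SR j (m:ℤ) := by
  intro m
  induction m using Nat.twoStepInduction with
  | zero => exact base0 hj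
  | one => exact base1 hj
  | more m ih _ =>
    have hk := ih
    have h1 := rec_SI hj (m:ℤ)
    have h2 := SR_step hj (m:ℤ) (Int.natCast_nonneg m)
    have hD : (((m:ℤ):ℂ)+2*j+2) ≠ 0 := by
      apply ne_zero_of_re_pos'
      rw [show (((m:ℤ):ℂ)+2*j+2 : ℂ) = 2*j + (((m:ℝ)+2 : ℝ):ℂ) by push_cast; ring,
        Complex.add_re, Complex.ofReal_re, show (2*j).re = 2*j.re by simp [Complex.mul_re]]
      have : (0:ℝ) ≤ (m:ℝ) := Nat.cast_nonneg m
      linarith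
    rw [show (((m+2 : ℕ)):ℤ) = (m:ℤ)+2 by push_cast; ring]
    exact mul_left_cancel₀ hD (by linear_combination h1 - h2 - (2*j - ((m:ℤ):ℂ))*hk)

lemma main_all (hj : (-1/2 : ℝ) < j.re) (n : ℤ) : SI j n = SR j n := by
  obtain ⟨m, rfl | rfl⟩ := Int.eq_nat_or_neg n
  · exact main_nonneg hj m
  · rw [SI_neg, SR_neg, main_nonneg hj m]

end Stmt4Aux

/-- For `Re j > -1/2` and `n ∈ ℤ`,
`∫₀^π e^{inφ} (2 sin φ)^{2j} dφ = π e^{iπn/2} Γ(2j+1)/(Γ(1+j+n/2) Γ(1+j-n/2))`. -/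
theorem stmt_4 (j : ℂ) (hj : (-1/2 : ℝ) < j.re) (n : ℤ) :
    ∫ φ in (0 : ℝ)..Real.pi,
        Complex.exp (Complex.I * (n : ℂ) * (φ : ℂ)) *
          ((2 * Real.sin φ : ℝ) : ℂ) ^ (2 * j) =
      (Real.pi : ℂ) * Complex.exp (Complex.I * (Real.pi : ℂ) * (n : ℂ) / 2) *
        Complex.Gamma (2 * j + 1) /
        (Complex.Gamma (1 + j + (n : ℂ) / 2) * Complex.Gamma (1 + j - (n : ℂ) / 2)) :=
  Stmt4Aux.main_all hj n
end

section
/- Let j ∈ ℂ with Re j > −1/2, n ∈ ℤ, and ε ∈ {0,1}. Define π^ε_n = 1 if n ≡ ε (mod 2) and π^ε_n = 0 otherwise. Then e^{−inπ/2} ∫₀^π (e^{inφ} + (−1)^ε e^{−inφ}) (2 sin φ)^{2j} dφ = 2π · π^ε_n · Γ(2j+1)/(Γ(1 + j + n/2) Γ(1 + j − n/2)); in particular the integral vanishes whenever n + ε is odd. -/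
open Complex intervalIntegral

section Stmt5Aux

open MeasureTheory Set

noncomputable section
namespace Stmt5


lemma cpow_pos_def {a : ℝ} (ha : 0 < a) (w : ℂ) :
    ((a : ℂ)) ^ w = Complex.exp ((Real.log a : ℂ) * w) := by
  rw [Complex.cpow_def_of_ne_zero (by exact_mod_cast ha.ne'), Complex.ofReal_log ha.le]

/-- the substitution map -/
def f (φ : ℝ) : ℝ := Real.sin (φ/2) ^ 2

lemma f_deriv {φ : ℝ} :
    HasDerivWithinAt f (Real.sin (φ/2) * Real.cos (φ/2)) (Ioo 0 Real.pi) φ := by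
  have h1 : HasDerivAt (fun x : ℝ => Real.sin (x/2)) (Real.cos (φ/2) * (2⁻¹)) φ := by
    convert (Real.hasDerivAt_sin (φ/2)).comp φ ((hasDerivAt_id φ).div_const 2) using 1
    · rfl
    · rfl
    · rfl
    · norm_num
  have := h1.pow 2
  norm_num at this
  convert this.hasDerivWithinAt using 1
  · rfl
  · rfl
  · rfl
  ring

lemma sin_half_mem {φ : ℝ} (hφ : φ ∈ Ioo 0 Real.pi) :
    0 < Real.sin (φ/2) ∧ 0 < Real.cos (φ/2) := by
  obtain ⟨h1, h2⟩ := hφ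
  constructor
  · exact Real.sin_pos_of_pos_of_lt_pi (by linarith) (by linarith [Real.pi_pos])
  · exact Real.cos_pos_of_mem_Ioo ⟨by linarith [Real.pi_pos], by linarith⟩

lemma f_inj : InjOn f (Ioo 0 Real.pi) := by
  intro x hx y hy h
  have hx' := sin_half_mem hx
  have hy' := sin_half_mem hy
  simp only [f] at h
  have hs : Real.sin (x/2) = Real.sin (y/2) := by nlinarith [hx'.1, hy'.1]
  have := Real.injOn_sin ⟨by linarith [hx.1, Real.pi_pos], by linarith [hx.2]⟩
    ⟨by linarith [hy.1, Real.pi_pos], by linarith [hy.2]⟩ hs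
  linarith

lemma f_image : f '' (Ioo 0 Real.pi) = Ioo 0 1 := by
  ext y
  constructor
  · rintro ⟨φ, hφ, rfl⟩
    have h := sin_half_mem hφ
    have hsq := Real.sin_sq_add_cos_sq (φ/2)
    constructor
    · simp only [f]; nlinarith [h.1]
    · simp only [f]; nlinarith [h.2]
  · intro hy
    have h1 : 0 < Real.sqrt y := Real.sqrt_pos.2 hy.1
    have h2 : Real.sqrt y < 1 := by
      rw [show (1:ℝ) = Real.sqrt 1 by simp]
      exact Real.sqrt_lt_sqrt hy.1.le hy.2
    have ha1 : 0 < Real.arcsin (Real.sqrt y) := Real.arcsin_pos.2 h1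
    have ha2 : Real.arcsin (Real.sqrt y) < Real.pi/2 := Real.arcsin_lt_pi_div_two.2 h2
    refine ⟨2 * Real.arcsin (Real.sqrt y), ⟨by linarith, by linarith⟩, ?_⟩
    simp only [f]
    rw [show 2 * Real.arcsin (Real.sqrt y) / 2 = Real.arcsin (Real.sqrt y) by ring,
      Real.sin_arcsin (by linarith [Real.sqrt_nonneg y]) h2.le, Real.sq_sqrt hy.1.le]

lemma key_pointwise (c : ℂ) {φ : ℝ} (hφ : φ ∈ Ioo 0 Real.pi) :
    ((2 * Real.sin φ : ℝ) : ℂ) ^ c =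
      (4 : ℂ) ^ c * (|Real.sin (φ/2) * Real.cos (φ/2)| •
        (((f φ : ℝ) : ℂ) ^ ((c+1)/2 - 1) * (1 - ((f φ : ℝ) : ℂ)) ^ ((c+1)/2 - 1))) := by
  obtain ⟨ha, hb⟩ := sin_half_mem hφ
  set a := Real.sin (φ/2) with hadef
  set b := Real.cos (φ/2) with hbdef
  have hsin : 2 * Real.sin φ = 4 * (a * b) := by
    rw [show φ = 2 * (φ/2) by ring, Real.sin_two_mul]; ring
  have hf : f φ = a^2 := rfl
  have h1f : (1 : ℂ) - ((f φ : ℝ) : ℂ) = ((b^2 : ℝ) : ℂ) := by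
    have h' : (1:ℝ) - f φ = b^2 := by
      have := Real.sin_sq_add_cos_sq (φ/2); simp only [f, ← hadef, ← hbdef]; linarith
    push_cast [← h']; ring
  rw [hsin, h1f, hf, abs_of_pos (mul_pos ha hb), Complex.real_smul]
  rw [cpow_pos_def (by positivity : (0:ℝ) < 4*(a*b)),
    cpow_pos_def (by positivity : (0:ℝ) < a^2), cpow_pos_def (by positivity : (0:ℝ) < b^2),
    show (4:ℂ) = ((4:ℝ):ℂ) by norm_num, cpow_pos_def (by norm_num : (0:ℝ) < 4)]
  have hab : ((a*b : ℝ) : ℂ) = Complex.exp ((Real.log (a*b) : ℝ) : ℂ) := by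
    rw [← Complex.ofReal_exp, Real.exp_log (mul_pos ha hb)]
  push_cast at hab ⊢
  rw [hab]
  simp only [← Complex.exp_add]
  congr 1
  have l4 : Real.log (4*(a*b)) = Real.log 4 + (Real.log a + Real.log b) := by
    rw [Real.log_mul (by norm_num) (by positivity), Real.log_mul ha.ne' hb.ne']
  have la : Real.log (a^2) = 2 * Real.log a := by
    rw [Real.log_pow]; push_cast; ring
  have lb : Real.log (b^2) = 2 * Real.log b := by
    rw [Real.log_pow]; push_cast; ring
  have lab : Real.log (a*b) = Real.log a + Real.log b := Real.log_mul ha.ne' hb.ne'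
  rw [l4, la, lb, lab]
  push_cast
  ring

lemma setIntegral_sin_cpow (c : ℂ) :
    ∫ φ in Ioo (0:ℝ) Real.pi, ((2*Real.sin φ : ℝ):ℂ)^c
      = (4:ℂ)^c * ∫ x in Ioo (0:ℝ) 1,
          ((x : ℝ):ℂ)^((c+1)/2 - 1) * (1 - ((x : ℝ):ℂ))^((c+1)/2 - 1) := by
  calc ∫ φ in Ioo (0:ℝ) Real.pi, ((2*Real.sin φ : ℝ):ℂ)^c
      = ∫ φ in Ioo (0:ℝ) Real.pi, (4:ℂ)^c * (|Real.sin (φ/2) * Real.cos (φ/2)| •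
          (((f φ : ℝ) : ℂ) ^ ((c+1)/2 - 1) * (1 - ((f φ : ℝ) : ℂ)) ^ ((c+1)/2 - 1))) :=
        setIntegral_congr_fun measurableSet_Ioo (fun φ hφ => key_pointwise c hφ)
    _ = (4:ℂ)^c * ∫ φ in Ioo (0:ℝ) Real.pi, |Real.sin (φ/2) * Real.cos (φ/2)| •
          (((f φ : ℝ) : ℂ) ^ ((c+1)/2 - 1) * (1 - ((f φ : ℝ) : ℂ)) ^ ((c+1)/2 - 1)) :=
        MeasureTheory.integral_const_mul _ _
    _ = (4:ℂ)^c * ∫ x in f '' (Ioo (0:ℝ) Real.pi),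
          ((x : ℝ):ℂ)^((c+1)/2 - 1) * (1 - ((x : ℝ):ℂ))^((c+1)/2 - 1) := by
        rw [integral_image_eq_integral_abs_deriv_smul measurableSet_Ioo
          (fun x _ => f_deriv) f_inj]
    _ = _ := by rw [f_image]

lemma re_succ_half {c : ℂ} (hc : -1 < c.re) : 0 < ((c+1)/2).re := by
  have : ((c+1)/2) = ((1/2 : ℝ) : ℂ) * (c+1) := by push_cast; ring
  rw [this, Complex.re_ofReal_mul, Complex.add_re, Complex.one_re]
  linarith

lemma integrableOn_sin_cpow {c : ℂ} (hc : -1 < c.re) :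
    IntegrableOn (fun φ => ((2*Real.sin φ : ℝ):ℂ)^c) (Ioo 0 Real.pi) := by
  have hu := re_succ_half hc
  have hbeta := Complex.betaIntegral_convergent hu hu
  have h1 : IntegrableOn (fun x : ℝ => ((x : ℝ):ℂ)^((c+1)/2 - 1) * (1 - ((x : ℝ):ℂ))^((c+1)/2 - 1))
      (Ioo (0:ℝ) 1) :=
    ((intervalIntegrable_iff_integrableOn_Ioc_of_le (by norm_num)).mp hbeta).mono_set
      Ioo_subset_Ioc_self
  rw [← f_image] at h1
  have h2 := (integrableOn_image_iff_integrableOn_abs_deriv_smul measurableSet_Ioo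
    (fun x _ => f_deriv) f_inj _).mp h1
  have h3 := h2.const_mul ((4:ℂ)^c)
  exact IntegrableOn.congr_fun h3 (fun φ hφ => (key_pointwise c hφ).symm) measurableSet_Ioo

lemma intervalIntegrable_mul_sin_cpow {c : ℂ} (hc : -1 < c.re) {h : ℝ → ℂ}
    (hh : Measurable h) {C : ℝ} (hC : ∀ x, ‖h x‖ ≤ C) :
    IntervalIntegrable (fun φ => h φ * ((2*Real.sin φ : ℝ):ℂ)^c) volume 0 Real.pi := by
  rw [intervalIntegrable_iff_integrableOn_Ioc_of_le Real.pi_pos.le,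
    integrableOn_Ioc_iff_integrableOn_Ioo]
  exact (integrableOn_sin_cpow hc).bdd_mul hh.aestronglyMeasurable.restrict (ae_of_all _ hC)




lemma continuous_sin_cpow {c : ℂ} (hc : 0 < c.re) :
    Continuous (fun φ : ℝ => ((2*Real.sin φ : ℝ):ℂ)^c) := by
  rw [continuous_iff_continuousAt]
  intro x
  exact (Complex.continuousAt_ofReal_cpow_const _ _ (Or.inl hc)).comp
    ((continuous_const.mul Real.continuous_sin).continuousAt)

lemma norm_exp_I_mul (m : ℤ) (φ : ℝ) : ‖Complex.exp (Complex.I*m*φ)‖ = 1 := by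
  rw [Complex.norm_exp]
  simp [Complex.mul_re]

lemma hasDerivAt_G {c : ℂ} (m : ℤ) {x : ℝ} (hx : x ∈ Ioo 0 Real.pi) :
    HasDerivAt (fun φ : ℝ => Complex.exp (Complex.I*m*φ) * ((2*Real.sin φ:ℝ):ℂ)^(c+1))
      (Complex.exp (Complex.I*m*x) *
        (Complex.I*m*((2*Real.sin x:ℝ):ℂ)^(c+1)
          + (c+1) * ((2*Real.sin x:ℝ):ℂ)^c * ((2*Real.cos x:ℝ):ℂ))) x := by
  have hr : (0:ℝ) < 2*Real.sin x :=
    mul_pos two_pos (Real.sin_pos_of_pos_of_lt_pi hx.1 hx.2)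
  -- derivative of the exponent
  have h1 : HasDerivAt (fun φ : ℝ => Complex.I*m*(φ:ℂ)) (Complex.I*m) x := by
    simpa using (Complex.ofRealCLM.hasDerivAt (x := x)).const_mul (Complex.I*(m:ℂ))
  have hlog : HasDerivAt (fun φ : ℝ => Real.log (2*Real.sin φ))
      ((2*Real.sin x)⁻¹ * (2*Real.cos x)) x :=
    (Real.hasDerivAt_log hr.ne').comp (h := fun y => 2 * Real.sin y) x ((Real.hasDerivAt_sin x).const_mul 2)
  have h2 : HasDerivAt (fun φ : ℝ => ((Real.log (2*Real.sin φ) : ℝ):ℂ) * (c+1))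
      ((((2*Real.sin x)⁻¹ * (2*Real.cos x) : ℝ):ℂ) * (c+1)) x :=
    hlog.ofReal_comp.mul_const (c+1)
  have hu := ((h1.add h2).cexp)
  have heq : (fun φ : ℝ => Complex.exp (Complex.I*m*φ) * ((2*Real.sin φ:ℝ):ℂ)^(c+1))
      =ᶠ[nhds x] (fun φ : ℝ =>
        Complex.exp (Complex.I*m*(φ:ℂ) + ((Real.log (2*Real.sin φ) : ℝ):ℂ) * (c+1))) := by
    filter_upwards [isOpen_Ioo.mem_nhds hx] with y hy
    have hry : (0:ℝ) < 2*Real.sin y :=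
      mul_pos two_pos (Real.sin_pos_of_pos_of_lt_pi hy.1 hy.2)
    rw [cpow_pos_def hry, Complex.exp_add]
  have hgoal := hu.congr_of_eventuallyEq heq
  convert hgoal using 1
  · rfl
  rw [Pi.add_apply]
  have hcast : ((2*Real.sin x:ℝ):ℂ) = Complex.exp ((Real.log (2*Real.sin x) : ℝ):ℂ) := by
    rw [← Complex.ofReal_exp, Real.exp_log hr]
  rw [Complex.exp_add, cpow_pos_def hr, cpow_pos_def hr]
  rw [show ((Real.log (2*Real.sin x) : ℝ):ℂ) * (c+1)
      = ((Real.log (2*Real.sin x) : ℝ):ℂ) * c + ((Real.log (2*Real.sin x) : ℝ):ℂ) by ring,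
    Complex.exp_add, ← hcast]
  have h2s : ((2*Real.sin x:ℝ):ℂ) ≠ 0 := by exact_mod_cast hr.ne'
  push_cast at h2s ⊢
  have hs0 : Complex.sin (x:ℂ) ≠ 0 := by intro h0; exact h2s (by rw [h0, mul_zero])
  field_simp


lemma ftc {c : ℂ} (hc : -1 < c.re) (m : ℤ) :
    ∫ φ in (0:ℝ)..Real.pi, Complex.exp (Complex.I*m*φ) *
      (Complex.I*m*((2*Real.sin φ:ℝ):ℂ)^(c+1)
        + (c+1) * ((2*Real.sin φ:ℝ):ℂ)^c * ((2*Real.cos φ:ℝ):ℂ)) = 0 := by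
  have hc1 : 0 < (c+1).re := by rw [Complex.add_re, Complex.one_re]; linarith
  have hexp : Continuous (fun φ : ℝ => Complex.exp (Complex.I*m*φ)) :=
    ((continuous_const.mul Complex.continuous_ofReal)).cexp
  have hcont : ContinuousOn
      (fun φ : ℝ => Complex.exp (Complex.I*m*φ) * ((2*Real.sin φ:ℝ):ℂ)^(c+1))
      (Icc 0 Real.pi) :=
    (hexp.mul (continuous_sin_cpow hc1)).continuousOn
  have hint : IntervalIntegrable (fun φ : ℝ => Complex.exp (Complex.I*m*φ) *
      (Complex.I*m*((2*Real.sin φ:ℝ):ℂ)^(c+1)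
        + (c+1) * ((2*Real.sin φ:ℝ):ℂ)^c * ((2*Real.cos φ:ℝ):ℂ))) volume 0 Real.pi := by
    have i1 : IntervalIntegrable
        (fun φ : ℝ => (Complex.exp (Complex.I*m*φ) * (Complex.I*m)) * ((2*Real.sin φ:ℝ):ℂ)^(c+1))
        volume 0 Real.pi := by
      refine intervalIntegrable_mul_sin_cpow (by linarith) ?_ (C := ‖Complex.I*(m:ℂ)‖) ?_
      · exact (hexp.mul continuous_const).measurable
      · intro x; rw [norm_mul, norm_exp_I_mul, one_mul]
    have i2 : IntervalIntegrable
        (fun φ : ℝ => (Complex.exp (Complex.I*m*φ) * ((c+1) * ((2*Real.cos φ:ℝ):ℂ)))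
          * ((2*Real.sin φ:ℝ):ℂ)^c) volume 0 Real.pi := by
      refine intervalIntegrable_mul_sin_cpow hc ?_ (C := ‖(c+1)‖ * 2) ?_
      · exact (hexp.mul (continuous_const.mul
          (Complex.continuous_ofReal.comp (continuous_const.mul Real.continuous_cos)))).measurable
      · intro x
        rw [norm_mul, norm_exp_I_mul, one_mul, norm_mul]
        have : ‖((2*Real.cos x:ℝ):ℂ)‖ ≤ 2 := by
          rw [Complex.norm_real, Real.norm_eq_abs, abs_mul]
          have := Real.abs_cos_le_one x
          have h2 : |(2:ℝ)| = 2 := by norm_num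
          nlinarith [abs_nonneg (Real.cos x)]
        have h1 : (0:ℝ) ≤ ‖(c+1)‖ := norm_nonneg _
        nlinarith
    have := i1.add i2
    convert this using 1
    funext φ
    ring
  have key := intervalIntegral.integral_eq_sub_of_hasDeriv_right_of_le Real.pi_pos.le hcont
    (fun x hx => (hasDerivAt_G m hx).hasDerivWithinAt) hint
  rw [key]
  have hne : c + 1 ≠ 0 := by
    intro h; rw [Complex.ext_iff] at h; simp at h; linarith [h.1]
  norm_num [Real.sin_pi, Complex.zero_cpow hne]



lemma re_add_half {s : ℂ} (hs : (-1/2 : ℝ) < s.re) : 0 < (s + 1/2).re := by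
  rw [show (1:ℂ)/2 = ((1/2:ℝ):ℂ) by norm_num, Complex.add_re, Complex.ofReal_re]
  linarith

lemma re_two_mul_add_one {s : ℂ} (hs : (-1/2 : ℝ) < s.re) : 0 < (2*s+1).re := by
  rw [Complex.add_re, Complex.one_re, show (2:ℂ)*s = ((2:ℝ):ℂ)*s by norm_num,
    Complex.re_ofReal_mul]
  linarith

lemma pow_cancel (s : ℂ) : (4:ℂ)^(2*s) * ((2:ℂ)^(-(2*s)))^2 = 1 := by
  have hlog4 : Real.log 4 = 2 * Real.log 2 := by
    rw [show (4:ℝ) = 2^2 by norm_num, Real.log_pow]; push_cast; ring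
  rw [show (4:ℂ) = ((4:ℝ):ℂ) by norm_num, show (2:ℂ) = ((2:ℝ):ℂ) by norm_num,
    cpow_pos_def (by norm_num : (0:ℝ) < 4), cpow_pos_def (by norm_num : (0:ℝ) < 2)]
  rw [pow_two, ← Complex.exp_add, ← Complex.exp_add]
  rw [show ((Real.log 4 : ℝ):ℂ) = 2*((Real.log 2 : ℝ):ℂ) by exact_mod_cast hlog4]
  convert Complex.exp_zero using 2
  ring

lemma sqrt_pi_sq : ((Real.sqrt Real.pi : ℝ):ℂ)^2 = (Real.pi : ℂ) := by
  rw [← Complex.ofReal_pow, Real.sq_sqrt Real.pi_pos.le]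

lemma duplication {s : ℂ} :
    Complex.Gamma (s+1/2) * Complex.Gamma (s+1)
      = Complex.Gamma (2*s+1) * (2:ℂ)^(-(2*s)) * ((Real.sqrt Real.pi : ℝ):ℂ) := by
  have h := Complex.Gamma_mul_Gamma_add_half (s+1/2)
  rw [show (1:ℂ)-2*(s+1/2) = -(2*s) by ring, show (s+1/2)+1/2 = s+1 by ring,
    show 2*(s+1/2) = 2*s+1 by ring] at h
  exact h

lemma integral_sin_cpow_value {s : ℂ} (hs : (-1/2 : ℝ) < s.re) :
    ∫ φ in Ioo (0:ℝ) Real.pi, ((2*Real.sin φ : ℝ):ℂ)^(2*s)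
      = (Real.pi:ℂ) * Complex.Gamma (2*s+1) / (Complex.Gamma (s+1))^2 := by
  have hu : 0 < (s+1/2).re := re_add_half hs
  have h2s1 : 0 < (2*s+1).re := re_two_mul_add_one hs
  have hG2 : Complex.Gamma (2*s+1) ≠ 0 := Complex.Gamma_ne_zero_of_re_pos h2s1
  have hG1 : Complex.Gamma (s+1) ≠ 0 := by
    apply Complex.Gamma_ne_zero_of_re_pos
    rw [Complex.add_re, Complex.one_re]; linarith
  rw [setIntegral_sin_cpow (2*s)]
  have hbeta_eq : (∫ x in Ioo (0:ℝ) 1,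
      ((x : ℝ):ℂ)^((2*s+1)/2 - 1) * (1 - ((x : ℝ):ℂ))^((2*s+1)/2 - 1))
      = Complex.betaIntegral (s+1/2) (s+1/2) := by
    rw [show (2*s+1)/2 - 1 = (s+1/2) - 1 from by ring, Complex.betaIntegral,
      intervalIntegral.integral_of_le (by norm_num : (0:ℝ) ≤ 1), integral_Ioc_eq_integral_Ioo]
  rw [hbeta_eq]
  have hbeta := (Complex.Gamma_mul_Gamma_eq_betaIntegral hu hu).symm
  rw [show s+1/2+(s+1/2) = 2*s+1 by ring] at hbeta
  have hbval : Complex.betaIntegral (s+1/2) (s+1/2)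
      = Complex.Gamma (s+1/2)^2 / Complex.Gamma (2*s+1) := by
    rw [eq_div_iff hG2]
    linear_combination hbeta
  rw [hbval]
  have hdup := duplication (s := s)
  -- (Γ(s+1/2))^2 = (Γ(2s+1) 2^{-2s} √π / Γ(s+1))^2
  have hsq : Complex.Gamma (s+1/2)^2 * Complex.Gamma (s+1)^2
      = Complex.Gamma (2*s+1)^2 * ((2:ℂ)^(-(2*s)))^2 * (Real.pi:ℂ) := by
    rw [← sqrt_pi_sq]
    rw [← mul_pow, ← mul_pow, ← mul_pow, hdup]
  have hpc := pow_cancel s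
  rw [mul_div_assoc', div_eq_div_iff hG2 (pow_ne_zero 2 hG1)]
  linear_combination (4:ℂ)^(2*s) * hsq + (Real.pi:ℂ) * Complex.Gamma (2*s+1)^2 * hpc


/-- the key integral -/
def Jint (j : ℂ) (m : ℤ) : ℂ :=
  ∫ φ in (0:ℝ)..Real.pi, Complex.exp (Complex.I*m*φ) * ((2*Real.sin φ:ℝ):ℂ)^(2*j)

lemma re2j {j : ℂ} (hj : (-1/2 : ℝ) < j.re) : -1 < (2*j).re := by
  rw [show (2:ℂ)*j = ((2:ℝ):ℂ)*j by norm_num, Complex.re_ofReal_mul]; linarith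

lemma Jint_integrable {j : ℂ} (hj : (-1/2 : ℝ) < j.re) (m : ℤ) :
    IntervalIntegrable (fun φ => Complex.exp (Complex.I*m*φ) * ((2*Real.sin φ:ℝ):ℂ)^(2*j))
      volume 0 Real.pi := by
  refine intervalIntegrable_mul_sin_cpow (re2j hj) ?_ (C := 1) (fun x => (norm_exp_I_mul m x).le)
  exact ((continuous_const.mul Complex.continuous_ofReal).cexp).measurable

/-- recursion -/
lemma Jint_rec {j : ℂ} (hj : (-1/2 : ℝ) < j.re) (m : ℤ) :
    (2*j+2+m) * Jint j (m+2) + (2*j-m) * Jint j m = 0 := by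
  have h0 := ftc (re2j hj) (m+1)
  -- rewrite the integrand a.e.
  have hae : ∀ᵐ (x : ℝ) ∂volume, x ∈ Set.uIoc (0:ℝ) Real.pi →
      Complex.exp (Complex.I*(m+1:ℤ)*x) *
        (Complex.I*(m+1:ℤ)*((2*Real.sin x:ℝ):ℂ)^(2*j+1)
          + (2*j+1) * ((2*Real.sin x:ℝ):ℂ)^(2*j) * ((2*Real.cos x:ℝ):ℂ))
      = (2*j+2+m) * (Complex.exp (Complex.I*(m+2:ℤ)*x) * ((2*Real.sin x:ℝ):ℂ)^(2*j))
        + (2*j-m) * (Complex.exp (Complex.I*m*x) * ((2*Real.sin x:ℝ):ℂ)^(2*j)) := by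
    have hpi : ∀ᵐ (x : ℝ) ∂volume, x ∉ ({Real.pi} : Set ℝ) :=
      compl_mem_ae_iff.2 (measure_singleton _)
    filter_upwards [hpi] with x hx hmem
    rw [Set.uIoc_of_le Real.pi_pos.le] at hmem
    have hxx : x ∈ Ioo (0:ℝ) Real.pi := ⟨hmem.1, lt_of_le_of_ne hmem.2 (by simpa using hx)⟩
    have hsx : 0 < Real.sin x := Real.sin_pos_of_pos_of_lt_pi hxx.1 hxx.2
    have hr : (0:ℝ) < 2*Real.sin x := by linarith
    have hrne : ((2*Real.sin x:ℝ):ℂ) ≠ 0 := by exact_mod_cast hr.ne'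
    set E1 := Complex.exp (Complex.I*(x:ℂ)) with hE1def
    set E2 := Complex.exp (-(Complex.I*(x:ℂ))) with hE2def
    set A := Complex.exp (Complex.I*(m:ℂ)*(x:ℂ)) with hAdef
    have hE1 : E1 = ((Real.cos x:ℝ):ℂ) + ((Real.sin x:ℝ):ℂ)*Complex.I := by
      rw [hE1def, show Complex.I*(x:ℂ) = (x:ℂ)*Complex.I by ring, Complex.exp_mul_I,
        Complex.ofReal_cos, Complex.ofReal_sin]
    have hE2 : E2 = ((Real.cos x:ℝ):ℂ) - ((Real.sin x:ℝ):ℂ)*Complex.I := by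
      rw [hE2def, show -(Complex.I*(x:ℂ)) = ((-x:ℝ):ℂ)*Complex.I by push_cast; ring,
        Complex.exp_mul_I]
      push_cast
      rw [Complex.cos_neg, Complex.sin_neg]
      ring
    have hE : E1 * E2 = 1 := by
      rw [hE1def, hE2def, ← Complex.exp_add]; simp
    have h1 : 2*((Real.sin x:ℝ):ℂ)*Complex.I = E1 - E2 := by rw [hE1, hE2]; ring
    have h2 : 2*((Real.cos x:ℝ):ℂ) = E1 + E2 := by rw [hE1, hE2]; ring
    have hexp1 : Complex.exp (Complex.I*((m:ℤ)+1:ℤ)*(x:ℂ)) = A * E1 := by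
      rw [hAdef, hE1def, ← Complex.exp_add]; push_cast; ring_nf
    have hexp2 : Complex.exp (Complex.I*((m:ℤ)+2:ℤ)*(x:ℂ)) = A * E1 * E1 := by
      rw [hAdef, hE1def, ← Complex.exp_add, ← Complex.exp_add]; push_cast; ring_nf
    have hcpow : ((2*Real.sin x:ℝ):ℂ)^(2*j+1)
        = ((2*Real.sin x:ℝ):ℂ)^(2*j) * ((2*Real.sin x:ℝ):ℂ) := by
      rw [Complex.cpow_add _ _ hrne, Complex.cpow_one]
    rw [hexp1, hexp2, hcpow]
    push_cast at h1 h2 ⊢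
    linear_combination (A*E1*((m:ℂ)+1)*((2*Complex.sin (x:ℂ))^(2*j)))*h1
      + (A*E1*(2*j+1)*((2*Complex.sin (x:ℂ))^(2*j)))*h2
      + (A*((2*Complex.sin (x:ℂ))^(2*j))*(2*j-(m:ℂ)))*hE
  rw [intervalIntegral.integral_congr_ae hae] at h0
  have i1 := intervalIntegrable_mul_sin_cpow (re2j hj)
    (h := fun x => (2*j+2+(m:ℂ)) * Complex.exp (Complex.I*(m+2:ℤ)*x))
    (continuous_const.mul ((continuous_const.mul Complex.continuous_ofReal).cexp)).measurable
    (C := ‖2*j+2+(m:ℂ)‖)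
    (fun x => by rw [norm_mul, norm_exp_I_mul, mul_one])
  have i2 := intervalIntegrable_mul_sin_cpow (re2j hj)
    (h := fun x => (2*j-(m:ℂ)) * Complex.exp (Complex.I*m*x))
    (continuous_const.mul ((continuous_const.mul Complex.continuous_ofReal).cexp)).measurable
    (C := ‖2*j-(m:ℂ)‖)
    (fun x => by rw [norm_mul, norm_exp_I_mul, mul_one])
  rw [show (fun x : ℝ => (2*j+2+(m:ℂ)) * (Complex.exp (Complex.I*(m+2:ℤ)*x) * ((2*Real.sin x:ℝ):ℂ)^(2*j))
        + (2*j-(m:ℂ)) * (Complex.exp (Complex.I*m*x) * ((2*Real.sin x:ℝ):ℂ)^(2*j)))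
      = (fun x : ℝ => ((2*j+2+(m:ℂ)) * Complex.exp (Complex.I*(m+2:ℤ)*x)) * ((2*Real.sin x:ℝ):ℂ)^(2*j)
        + ((2*j-(m:ℂ)) * Complex.exp (Complex.I*m*x)) * ((2*Real.sin x:ℝ):ℂ)^(2*j))
      from by funext x; ring] at h0
  rw [intervalIntegral.integral_add i1 i2] at h0
  have e1 : ∫ x in (0:ℝ)..Real.pi,
      ((2*j+2+(m:ℂ)) * Complex.exp (Complex.I*(m+2:ℤ)*x)) * ((2*Real.sin x:ℝ):ℂ)^(2*j)
      = (2*j+2+(m:ℂ)) * Jint j (m+2) := by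
    rw [Jint, ← intervalIntegral.integral_const_mul]
    congr 1; funext x; ring
  have e2 : ∫ x in (0:ℝ)..Real.pi,
      ((2*j-(m:ℂ)) * Complex.exp (Complex.I*m*x)) * ((2*Real.sin x:ℝ):ℂ)^(2*j)
      = (2*j-(m:ℂ)) * Jint j m := by
    rw [Jint, ← intervalIntegral.integral_const_mul]
    congr 1; funext x; ring
  rw [e1, e2] at h0
  convert h0 using 3 <;> push_cast <;> ring

lemma Jint_symm (j : ℂ) (m : ℤ) :
    Jint j m = Complex.exp (Complex.I*m*Real.pi) * Jint j (-m) := by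
  have h := intervalIntegral.integral_comp_sub_left (a := (0:ℝ)) (b := Real.pi)
    (fun x : ℝ => Complex.exp (Complex.I*m*x) * ((2*Real.sin x:ℝ):ℂ)^(2*j)) Real.pi
  simp only [sub_self, sub_zero] at h
  rw [Jint, ← h]
  have : ∀ x : ℝ, Complex.exp (Complex.I*m*((Real.pi - x : ℝ):ℂ)) *
        ((2*Real.sin (Real.pi - x):ℝ):ℂ)^(2*j)
      = Complex.exp (Complex.I*m*(Real.pi:ℂ)) *
        (Complex.exp (Complex.I*((-m : ℤ):ℂ)*x) * ((2*Real.sin x:ℝ):ℂ)^(2*j)) := by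
    intro x
    rw [Real.sin_pi_sub, show Complex.I*(m:ℂ)*((Real.pi - x : ℝ):ℂ)
        = Complex.I*(m:ℂ)*(Real.pi:ℂ) + Complex.I*((-m : ℤ):ℂ)*(x:ℂ) by push_cast; ring,
      Complex.exp_add, mul_assoc]
  calc (∫ x in (0:ℝ)..Real.pi, Complex.exp (Complex.I*m*((Real.pi - x : ℝ):ℂ)) *
        ((2*Real.sin (Real.pi - x):ℝ):ℂ)^(2*j))
      = ∫ x in (0:ℝ)..Real.pi, Complex.exp (Complex.I*m*(Real.pi:ℂ)) *
        (Complex.exp (Complex.I*((-m : ℤ):ℂ)*x) * ((2*Real.sin x:ℝ):ℂ)^(2*j)) :=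
        intervalIntegral.integral_congr (fun x _ => this x)
    _ = _ := by rw [intervalIntegral.integral_const_mul]; rfl

lemma Jint_zero {j : ℂ} (hj : (-1/2 : ℝ) < j.re) :
    Jint j 0 = (Real.pi:ℂ) * Complex.Gamma (2*j+1) / (Complex.Gamma (j+1))^2 := by
  rw [Jint, show (fun φ : ℝ => Complex.exp (Complex.I*((0:ℤ):ℂ)*φ) * ((2*Real.sin φ:ℝ):ℂ)^(2*j))
      = fun φ : ℝ => ((2*Real.sin φ:ℝ):ℂ)^(2*j) from by funext φ; simp]
  rw [intervalIntegral.integral_of_le Real.pi_pos.le, integral_Ioc_eq_integral_Ioo,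
    integral_sin_cpow_value hj]

lemma two_j_one_ne {j : ℂ} (hj : (-1/2 : ℝ) < j.re) : 2*j+1 ≠ 0 := by
  intro h
  have := congrArg Complex.re h
  rw [Complex.add_re, Complex.one_re, show (2:ℂ)*j = ((2:ℝ):ℂ)*j by norm_num,
    Complex.re_ofReal_mul, Complex.zero_re] at this
  linarith

lemma j_half_ne {j : ℂ} (hj : (-1/2 : ℝ) < j.re) : j+1/2 ≠ 0 := by
  intro h
  have := congrArg Complex.re h
  rw [Complex.add_re, show (1:ℂ)/2 = ((1/2:ℝ):ℂ) by norm_num, Complex.ofReal_re,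
    Complex.zero_re] at this
  linarith

lemma cos_part {j : ℂ} (hj : (-1/2 : ℝ) < j.re) :
    ∫ φ in (0:ℝ)..Real.pi, ((2*Real.cos φ:ℝ):ℂ) * ((2*Real.sin φ:ℝ):ℂ)^(2*j) = 0 := by
  have h0 := ftc (re2j hj) 0
  simp only [Int.cast_zero, mul_zero, zero_mul, Complex.exp_zero, one_mul, zero_add] at h0
  rw [show (fun φ : ℝ => (2*j+1) * ((2*Real.sin φ:ℝ):ℂ)^(2*j) * ((2*Real.cos φ:ℝ):ℂ))
      = fun φ : ℝ => (2*j+1) * (((2*Real.cos φ:ℝ):ℂ) * ((2*Real.sin φ:ℝ):ℂ)^(2*j))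
      from by funext φ; ring, intervalIntegral.integral_const_mul] at h0
  exact (mul_eq_zero.mp h0).resolve_left (two_j_one_ne hj)

lemma Jint_one_val {j : ℂ} (hj : (-1/2 : ℝ) < j.re) :
    Jint j 1 = Complex.I/2 * ((Real.pi:ℂ) * Complex.Gamma (2*j+2) / (Complex.Gamma (j+3/2))^2) := by
  have i1 : IntervalIntegrable
      (fun φ : ℝ => ((2*Real.cos φ:ℝ):ℂ) * ((2*Real.sin φ:ℝ):ℂ)^(2*j)) volume 0 Real.pi := by
    refine intervalIntegrable_mul_sin_cpow (re2j hj)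
      (Complex.continuous_ofReal.comp (continuous_const.mul Real.continuous_cos)).measurable
      (C := 2) (fun x => ?_)
    rw [Complex.norm_real, Real.norm_eq_abs, abs_mul]
    have := Real.abs_cos_le_one x
    have h2 : |(2:ℝ)| = 2 := by norm_num
    nlinarith [abs_nonneg (Real.cos x)]
  have i2 : IntervalIntegrable
      (fun φ : ℝ => ((2*Real.sin φ:ℝ):ℂ) * ((2*Real.sin φ:ℝ):ℂ)^(2*j)) volume 0 Real.pi := by
    refine intervalIntegrable_mul_sin_cpow (re2j hj)
      (Complex.continuous_ofReal.comp (continuous_const.mul Real.continuous_sin)).measurable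
      (C := 2) (fun x => ?_)
    rw [Complex.norm_real, Real.norm_eq_abs, abs_mul]
    have := Real.abs_sin_le_one x
    have h2 : |(2:ℝ)| = 2 := by norm_num
    nlinarith [abs_nonneg (Real.sin x)]
  rw [Jint, show (fun φ : ℝ => Complex.exp (Complex.I*((1:ℤ):ℂ)*φ) * ((2*Real.sin φ:ℝ):ℂ)^(2*j))
      = fun φ : ℝ => (1/2 : ℂ) * (((2*Real.cos φ:ℝ):ℂ) * ((2*Real.sin φ:ℝ):ℂ)^(2*j))
        + (Complex.I/2) * (((2*Real.sin φ:ℝ):ℂ) * ((2*Real.sin φ:ℝ):ℂ)^(2*j)) from ?_]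
  rw [intervalIntegral.integral_add (i1.const_mul _) (i2.const_mul _),
    intervalIntegral.integral_const_mul, intervalIntegral.integral_const_mul,
    cos_part hj, mul_zero, zero_add]
  · congr 1
    have hcongr : EqOn (fun φ : ℝ => ((2*Real.sin φ:ℝ):ℂ) * ((2*Real.sin φ:ℝ):ℂ)^(2*j))
        (fun φ : ℝ => ((2*Real.sin φ:ℝ):ℂ)^(2*(j+1/2))) (Set.uIcc 0 Real.pi) := by
      intro x hx
      rw [Set.uIcc_of_le Real.pi_pos.le] at hx
      have hs0 : 0 ≤ Real.sin x := Real.sin_nonneg_of_nonneg_of_le_pi hx.1 hx.2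
      rcases hs0.eq_or_lt with h | h
      · have hb : ((2*Real.sin x:ℝ):ℂ) = 0 := by rw [← h]; norm_num
        simp only [hb, zero_mul, mul_zero]
        rw [Complex.zero_cpow (by rw [show 2*(j+1/2) = 2*j+1 by ring]; exact two_j_one_ne hj)]
      · have hr : (0:ℝ) < 2*Real.sin x := by linarith
        have hcast : ((2*Real.sin x:ℝ):ℂ) = Complex.exp ((Real.log (2*Real.sin x) : ℝ):ℂ) := by
          rw [← Complex.ofReal_exp, Real.exp_log hr]
        simp only [cpow_pos_def hr]
        rw [hcast, ← Complex.exp_add]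
        congr 1
        ring
    rw [intervalIntegral.integral_congr hcongr, intervalIntegral.integral_of_le Real.pi_pos.le,
      integral_Ioc_eq_integral_Ioo,
      integral_sin_cpow_value (s := j+1/2) (by
        rw [show j+(1:ℂ)/2 = j+((1/2:ℝ):ℂ) by norm_num, Complex.add_re, Complex.ofReal_re]
        linarith),
      show 2*(j+1/2)+1 = 2*j+2 by ring, show j+1/2+1 = j+3/2 by ring]
  · funext φ
    rw [show Complex.I*((1:ℤ):ℂ)*(φ:ℂ) = (φ:ℂ)*Complex.I by push_cast; ring, Complex.exp_mul_I]
    push_cast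
    ring

/-- the target value -/
def Jtarget (j : ℂ) (m : ℤ) : ℂ :=
  Complex.exp (Complex.I*m*Real.pi/2) * Real.pi * Complex.Gamma (2*j+1) /
    (Complex.Gamma (1+j+(m:ℂ)/2) * Complex.Gamma (1+j-(m:ℂ)/2))

lemma exp_I_pi_div_two : Complex.exp (Complex.I*(Real.pi:ℂ)/2) = Complex.I := by
  rw [show Complex.I*(Real.pi:ℂ)/2 = (((Real.pi/2 : ℝ)):ℂ)*Complex.I by push_cast; ring,
    Complex.exp_mul_I, Complex.ofReal_div]
  rw [show ((Real.pi:ℝ):ℂ)/((2:ℝ):ℂ) = (Real.pi:ℂ)/2 by norm_num,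
    Complex.cos_pi_div_two, Complex.sin_pi_div_two]
  ring

lemma Gamma_arg_ne {j : ℂ} (hj : (-1/2 : ℝ) < j.re) (m : ℕ) : (1+j+((m:ℕ):ℂ)/2) ≠ 0 := by
  intro h
  have := congrArg Complex.re h
  rw [show (1:ℂ)+j+((m:ℕ):ℂ)/2 = j + (((1 + (m:ℝ)/2 : ℝ)):ℂ) by push_cast; ring,
    Complex.add_re, Complex.ofReal_re, Complex.zero_re] at this
  have hm : (0:ℝ) ≤ (m:ℝ) := Nat.cast_nonneg m
  linarith

lemma Gamma_arg_ne' {j : ℂ} (hj : (-1/2 : ℝ) < j.re) (m : ℕ) :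
    Complex.Gamma (1+j+((m:ℕ):ℂ)/2) ≠ 0 := by
  apply Complex.Gamma_ne_zero_of_re_pos
  rw [show (1:ℂ)+j+((m:ℕ):ℂ)/2 = j + (((1 + (m:ℝ)/2 : ℝ)):ℂ) by push_cast; ring,
    Complex.add_re, Complex.ofReal_re]
  have hm : (0:ℝ) ≤ (m:ℝ) := Nat.cast_nonneg m
  linarith

lemma coeff_ne {j : ℂ} (hj : (-1/2 : ℝ) < j.re) (m : ℕ) : (2*j+2+((m:ℕ):ℂ)) ≠ 0 := by
  intro h
  have := congrArg Complex.re h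
  rw [show 2*j+2+((m:ℕ):ℂ) = ((2:ℝ):ℂ)*j + (((2 + (m:ℝ) : ℝ)):ℂ) by push_cast; ring,
    Complex.add_re, Complex.re_ofReal_mul, Complex.ofReal_re, Complex.zero_re] at this
  have hm : (0:ℝ) ≤ (m:ℝ) := Nat.cast_nonneg m
  linarith

lemma P_zero {j : ℂ} (hj : (-1/2 : ℝ) < j.re) : Jint j 0 = Jtarget j 0 := by
  rw [Jint_zero hj, Jtarget]
  rw [show Complex.I*((0:ℤ):ℂ)*(Real.pi:ℂ)/2 = 0 by push_cast; ring, Complex.exp_zero,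
    show (1:ℂ)+j+((0:ℤ):ℂ)/2 = j+1 by push_cast; ring,
    show (1:ℂ)+j-((0:ℤ):ℂ)/2 = j+1 by push_cast; ring]
  rw [one_mul, ← pow_two]

lemma P_one {j : ℂ} (hj : (-1/2 : ℝ) < j.re) : Jint j 1 = Jtarget j 1 := by
  rw [Jint_one_val hj, Jtarget]
  rw [show Complex.I*((1:ℤ):ℂ)*(Real.pi:ℂ)/2 = Complex.I*(Real.pi:ℂ)/2 by push_cast; ring,
    exp_I_pi_div_two,
    show (1:ℂ)+j+((1:ℤ):ℂ)/2 = j+3/2 by push_cast; ring,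
    show (1:ℂ)+j-((1:ℤ):ℂ)/2 = j+1/2 by push_cast; ring]
  have hA : Complex.Gamma (2*j+2) = (2*j+1) * Complex.Gamma (2*j+1) := by
    rw [show 2*j+2 = (2*j+1)+1 by ring, Complex.Gamma_add_one _ (two_j_one_ne hj)]
  have hB : Complex.Gamma (j+3/2) = (j+1/2) * Complex.Gamma (j+1/2) := by
    rw [show j+3/2 = (j+1/2)+1 by ring, Complex.Gamma_add_one _ (j_half_ne hj)]
  have hG0 : Complex.Gamma (j+1/2) ≠ 0 := by
    apply Complex.Gamma_ne_zero_of_re_pos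
    rw [show j+(1:ℂ)/2 = j+((1/2:ℝ):ℂ) by norm_num, Complex.add_re, Complex.ofReal_re]
    linarith
  rw [hA, hB]
  have hz := j_half_ne hj
  rw [← mul_div_assoc, div_eq_div_iff (pow_ne_zero 2 (mul_ne_zero hz hG0))
    (mul_ne_zero (mul_ne_zero hz hG0) hG0)]
  ring

lemma P_step {j : ℂ} (hj : (-1/2 : ℝ) < j.re) (m : ℕ)
    (hm : Jint j m = Jtarget j m) : Jint j ((m:ℤ)+2) = Jtarget j ((m:ℤ)+2) := by
  have hrec := Jint_rec hj (m:ℤ)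
  push_cast at hrec
  have hden := coeff_ne hj m
  by_cases hz : j - ((m:ℕ):ℂ)/2 = 0
  · have h2jm : 2*j - ((m:ℕ):ℂ) = 0 := by linear_combination 2*hz
    have hJ : Jint j ((m:ℤ)+2) = 0 := by
      rw [h2jm, zero_mul, add_zero] at hrec
      exact (mul_eq_zero.mp hrec).resolve_left hden
    rw [hJ, Jtarget,
      show (1:ℂ)+j-(((m:ℤ)+2:ℤ):ℂ)/2 = j - ((m:ℕ):ℂ)/2 by push_cast; ring, hz,
      Complex.Gamma_zero, mul_zero, div_zero]
  · have hne1 := Gamma_arg_ne hj m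
    have hG1 := Gamma_arg_ne' hj m
    have hgrw : Complex.Gamma ((1:ℂ)+j+(((m:ℤ)+2:ℤ):ℂ)/2)
        = (1+j+((m:ℕ):ℂ)/2) * Complex.Gamma (1+j+((m:ℕ):ℂ)/2) := by
      rw [show (1:ℂ)+j+(((m:ℤ)+2:ℤ):ℂ)/2 = (1+j+((m:ℕ):ℂ)/2)+1 by push_cast; ring,
        Complex.Gamma_add_one _ hne1]
    have hgrw2 : Complex.Gamma ((1:ℂ)+j-((m:ℕ):ℂ)/2)
        = (j-((m:ℕ):ℂ)/2) * Complex.Gamma (j-((m:ℕ):ℂ)/2) := by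
      rw [show (1:ℂ)+j-((m:ℕ):ℂ)/2 = (j-((m:ℕ):ℂ)/2)+1 by ring,
        Complex.Gamma_add_one _ hz]
    have hexp_step : Complex.exp (Complex.I*(((m:ℤ)+2:ℤ):ℂ)*(Real.pi:ℂ)/2)
        = -Complex.exp (Complex.I*((m:ℤ):ℂ)*(Real.pi:ℂ)/2) := by
      rw [show Complex.I*(((m:ℤ)+2:ℤ):ℂ)*(Real.pi:ℂ)/2
          = Complex.I*((m:ℤ):ℂ)*(Real.pi:ℂ)/2 + (Real.pi:ℂ)*Complex.I by push_cast; ring,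
        Complex.exp_add, Complex.exp_pi_mul_I]
      ring
    by_cases hg : Complex.Gamma (j - ((m:ℕ):ℂ)/2) = 0
    · have hJm : Jint j m = 0 := by
        rw [hm, Jtarget, show (1:ℂ)+j-((m:ℤ):ℂ)/2 = (1:ℂ)+j-((m:ℕ):ℂ)/2 by push_cast; ring,
          hgrw2, hg, mul_zero, mul_zero, div_zero]
      have hJ : Jint j ((m:ℤ)+2) = 0 := by
        rw [hJm, mul_zero, add_zero] at hrec
        exact (mul_eq_zero.mp hrec).resolve_left hden
      rw [hJ, Jtarget,
        show (1:ℂ)+j-(((m:ℤ)+2:ℤ):ℂ)/2 = j - ((m:ℕ):ℂ)/2 by push_cast; ring, hg,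
        mul_zero, div_zero]
    · have hJ : Jint j ((m:ℤ)+2) = (-(2*j-((m:ℕ):ℂ)) * Jint j m) / (2*j+2+((m:ℕ):ℂ)) := by
        rw [eq_div_iff hden]
        linear_combination hrec
      rw [hJ, hm, Jtarget, Jtarget,
        show (1:ℂ)+j-((m:ℤ):ℂ)/2 = (1:ℂ)+j-((m:ℕ):ℂ)/2 by push_cast; ring,
        show (1:ℂ)+j+((m:ℤ):ℂ)/2 = (1:ℂ)+j+((m:ℕ):ℂ)/2 by push_cast; ring,
        show Complex.I*((m:ℤ):ℂ)*(Real.pi:ℂ)/2 = Complex.I*((m:ℕ):ℂ)*(Real.pi:ℂ)/2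
          by push_cast; ring,
        show (1:ℂ)+j-(((m:ℤ)+2:ℤ):ℂ)/2 = j - ((m:ℕ):ℂ)/2 by push_cast; ring,
        hgrw, hgrw2, hexp_step, Int.cast_natCast]
      rw [← mul_div_assoc, div_div, div_eq_div_iff
        (mul_ne_zero (mul_ne_zero hG1 (mul_ne_zero hz hg)) hden)
        (mul_ne_zero (mul_ne_zero hne1 hG1) hg)]
      ring
  
lemma main_nat {j : ℂ} (hj : (-1/2 : ℝ) < j.re) : ∀ k : ℕ, Jint j k = Jtarget j k := by
  have H : ∀ k : ℕ, Jint j k = Jtarget j k ∧ Jint j ((k:ℤ)+1) = Jtarget j ((k:ℤ)+1) := by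
    intro k
    induction k with
    | zero =>
      constructor
      · exact P_zero hj
      · simpa using P_one hj
    | succ n ih =>
      constructor
      · rw [show (((n+1:ℕ)):ℤ) = (n:ℤ)+1 by push_cast; ring]
        exact ih.2
      · rw [show (((n+1:ℕ)):ℤ)+1 = (n:ℤ)+2 by push_cast; ring]
        exact P_step hj n ih.1
  exact fun k => (H k).1

lemma main {j : ℂ} (hj : (-1/2 : ℝ) < j.re) (m : ℤ) : Jint j m = Jtarget j m := by
  rcases le_or_gt 0 m with h | h
  · obtain ⟨k, rfl⟩ := Int.eq_ofNat_of_zero_le h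
    exact main_nat hj k
  · obtain ⟨k, rfl⟩ : ∃ k : ℕ, m = -(k:ℤ) := ⟨m.natAbs, by omega⟩
    have hs := Jint_symm j (-(k:ℤ))
    rw [neg_neg] at hs
    rw [hs, main_nat hj k, Jtarget, Jtarget]
    push_cast
    rw [show (1:ℂ)+j+(-(k:ℕ):ℂ)/2 = 1+j-((k:ℕ):ℂ)/2 by ring,
      show (1:ℂ)+j-(-(k:ℕ):ℂ)/2 = 1+j+((k:ℕ):ℂ)/2 by ring,
      mul_comm (Complex.Gamma ((1:ℂ)+j-((k:ℕ):ℂ)/2)) (Complex.Gamma ((1:ℂ)+j+((k:ℕ):ℂ)/2)),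
      ← mul_div_assoc, ← mul_assoc, ← mul_assoc, ← Complex.exp_add,
      show Complex.I*(-(k:ℕ):ℂ)*(Real.pi:ℂ) + Complex.I*((k:ℕ):ℂ)*(Real.pi:ℂ)/2
        = Complex.I*(-(k:ℕ):ℂ)*(Real.pi:ℂ)/2 by ring]

theorem final {j : ℂ} (hj : (-1/2 : ℝ) < j.re) (n : ℤ) (ε : ℤ) (hε : ε = 0 ∨ ε = 1) :
    Complex.exp (-(Complex.I * (n : ℂ) * (Real.pi : ℂ)) / 2) *
        ∫ φ in (0 : ℝ)..Real.pi,
          (Complex.exp (Complex.I * (n : ℂ) * (φ : ℂ)) +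
              (-1 : ℂ) ^ ε * Complex.exp (-(Complex.I * (n : ℂ) * (φ : ℂ)))) *
            ((2 * Real.sin φ : ℝ) : ℂ) ^ (2 * j) =
      2 * (Real.pi : ℂ) * (if n % 2 = ε % 2 then (1 : ℂ) else 0) *
        Complex.Gamma (2 * j + 1) /
        (Complex.Gamma (1 + j + (n : ℂ) / 2) * Complex.Gamma (1 + j - (n : ℂ) / 2)) ∧
    ((n + ε) % 2 = 1 →
      ∫ φ in (0 : ℝ)..Real.pi,
          (Complex.exp (Complex.I * (n : ℂ) * (φ : ℂ)) +
              (-1 : ℂ) ^ ε * Complex.exp (-(Complex.I * (n : ℂ) * (φ : ℂ)))) *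
            ((2 * Real.sin φ : ℝ) : ℂ) ^ (2 * j) = 0) := by
  have hsplit : (∫ φ in (0 : ℝ)..Real.pi,
          (Complex.exp (Complex.I * (n : ℂ) * (φ : ℂ)) +
              (-1 : ℂ) ^ ε * Complex.exp (-(Complex.I * (n : ℂ) * (φ : ℂ)))) *
            ((2 * Real.sin φ : ℝ) : ℂ) ^ (2 * j))
      = Jint j n + (-1:ℂ)^ε * Jint j (-n) := by
    rw [show (fun φ : ℝ => (Complex.exp (Complex.I * (n : ℂ) * (φ : ℂ)) +
              (-1 : ℂ) ^ ε * Complex.exp (-(Complex.I * (n : ℂ) * (φ : ℂ)))) *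
            ((2 * Real.sin φ : ℝ) : ℂ) ^ (2 * j))
        = fun φ : ℝ => Complex.exp (Complex.I*((n:ℤ):ℂ)*φ) * ((2*Real.sin φ:ℝ):ℂ)^(2*j)
            + (-1:ℂ)^ε * (Complex.exp (Complex.I*((-n:ℤ):ℂ)*φ) * ((2*Real.sin φ:ℝ):ℂ)^(2*j))
        from by
          funext φ
          rw [show Complex.I*((-n:ℤ):ℂ)*(φ:ℂ) = -(Complex.I*(n:ℂ)*(φ:ℂ)) by push_cast; ring]
          ring]
    rw [intervalIntegral.integral_add (Jint_integrable hj n)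
      ((Jint_integrable hj (-n)).const_mul _), intervalIntegral.integral_const_mul]
    rfl
  have hsq : (-1:ℂ)^n * (-1:ℂ)^n = 1 := by
    rw [← zpow_add₀ (by norm_num : (-1:ℂ) ≠ 0), show n+n = 2*n by ring, zpow_mul]
    norm_num
  have hAE : Complex.exp (-(Complex.I*(n:ℂ)*(Real.pi:ℂ))/2)
      * Complex.exp (Complex.I*((n:ℤ):ℂ)*(Real.pi:ℂ)/2) = 1 := by
    rw [← Complex.exp_add, show -(Complex.I*(n:ℂ)*(Real.pi:ℂ))/2
      + Complex.I*((n:ℤ):ℂ)*(Real.pi:ℂ)/2 = 0 by push_cast; ring, Complex.exp_zero]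
  have hAE' : Complex.exp (-(Complex.I*(n:ℂ)*(Real.pi:ℂ))/2)
      * Complex.exp (Complex.I*((-n:ℤ):ℂ)*(Real.pi:ℂ)/2) = (-1:ℂ)^n := by
    rw [← Complex.exp_add, show -(Complex.I*(n:ℂ)*(Real.pi:ℂ))/2
        + Complex.I*((-n:ℤ):ℂ)*(Real.pi:ℂ)/2 = ((-n:ℤ):ℂ)*((Real.pi:ℂ)*Complex.I)
        by push_cast; ring,
      Complex.exp_int_mul, Complex.exp_pi_mul_I, zpow_neg,
      inv_eq_of_mul_eq_one_right hsq]
  have hmain : Complex.exp (-(Complex.I * (n : ℂ) * (Real.pi : ℂ)) / 2) *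
        (∫ φ in (0 : ℝ)..Real.pi,
          (Complex.exp (Complex.I * (n : ℂ) * (φ : ℂ)) +
              (-1 : ℂ) ^ ε * Complex.exp (-(Complex.I * (n : ℂ) * (φ : ℂ)))) *
            ((2 * Real.sin φ : ℝ) : ℂ) ^ (2 * j)) =
      2 * (Real.pi : ℂ) * (if n % 2 = ε % 2 then (1 : ℂ) else 0) *
        Complex.Gamma (2 * j + 1) /
        (Complex.Gamma (1 + j + (n : ℂ) / 2) * Complex.Gamma (1 + j - (n : ℂ) / 2)) := by
    rw [hsplit, main hj n, main hj (-n), Jtarget, Jtarget]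
    rw [show (1:ℂ)+j+((-n:ℤ):ℂ)/2 = 1+j-((n:ℤ):ℂ)/2 by push_cast; ring,
        show (1:ℂ)+j-((-n:ℤ):ℂ)/2 = 1+j+((n:ℤ):ℂ)/2 by push_cast; ring,
        mul_comm (Complex.Gamma ((1:ℂ)+j-((n:ℤ):ℂ)/2)) (Complex.Gamma ((1:ℂ)+j+((n:ℤ):ℂ)/2))]
    calc Complex.exp (-(Complex.I*(n:ℂ)*(Real.pi:ℂ))/2) *
          (Complex.exp (Complex.I*((n:ℤ):ℂ)*(Real.pi:ℂ)/2) * (Real.pi:ℂ)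
              * Complex.Gamma (2*j+1) /
              (Complex.Gamma (1+j+((n:ℤ):ℂ)/2) * Complex.Gamma (1+j-((n:ℤ):ℂ)/2))
            + (-1:ℂ)^ε * (Complex.exp (Complex.I*((-n:ℤ):ℂ)*(Real.pi:ℂ)/2) * (Real.pi:ℂ)
              * Complex.Gamma (2*j+1) /
              (Complex.Gamma (1+j+((n:ℤ):ℂ)/2) * Complex.Gamma (1+j-((n:ℤ):ℂ)/2))))
        = (Complex.exp (-(Complex.I*(n:ℂ)*(Real.pi:ℂ))/2)
            * Complex.exp (Complex.I*((n:ℤ):ℂ)*(Real.pi:ℂ)/2))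
            * ((Real.pi:ℂ) * Complex.Gamma (2*j+1) /
              (Complex.Gamma (1+j+((n:ℤ):ℂ)/2) * Complex.Gamma (1+j-((n:ℤ):ℂ)/2)))
          + (Complex.exp (-(Complex.I*(n:ℂ)*(Real.pi:ℂ))/2)
            * Complex.exp (Complex.I*((-n:ℤ):ℂ)*(Real.pi:ℂ)/2))
            * ((-1:ℂ)^ε * ((Real.pi:ℂ) * Complex.Gamma (2*j+1) /
              (Complex.Gamma (1+j+((n:ℤ):ℂ)/2) * Complex.Gamma (1+j-((n:ℤ):ℂ)/2)))) := by
          ring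
      _ = (1 + (-1:ℂ)^n * (-1:ℂ)^ε) * ((Real.pi:ℂ) * Complex.Gamma (2*j+1) /
              (Complex.Gamma (1+j+((n:ℤ):ℂ)/2) * Complex.Gamma (1+j-((n:ℤ):ℂ)/2))) := by
          rw [hAE, hAE']
          ring
      _ = _ := by
          rcases hε with rfl | rfl
          · rcases Int.even_or_odd n with ⟨t, ht⟩ | ⟨t, ht⟩
            · have hv : (-1:ℂ)^n = 1 := by
                rw [ht, zpow_add₀ (by norm_num : (-1:ℂ) ≠ 0), ← mul_zpow]
                norm_num
              rw [hv, if_pos (by omega)]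
              ring
            · have hv : (-1:ℂ)^n = -1 := by
                rw [ht, zpow_add₀ (by norm_num : (-1:ℂ) ≠ 0), zpow_mul]
                norm_num
              rw [hv, if_neg (by omega)]
              ring
          · rcases Int.even_or_odd n with ⟨t, ht⟩ | ⟨t, ht⟩
            · have hv : (-1:ℂ)^n = 1 := by
                rw [ht, zpow_add₀ (by norm_num : (-1:ℂ) ≠ 0), ← mul_zpow]
                norm_num
              rw [hv, if_neg (by omega)]
              ring
            · have hv : (-1:ℂ)^n = -1 := by
                rw [ht, zpow_add₀ (by norm_num : (-1:ℂ) ≠ 0), zpow_mul]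
                norm_num
              rw [hv, if_pos (by omega)]
              ring
  refine ⟨hmain, fun hodd => ?_⟩
  rw [if_neg (by omega), mul_zero, zero_mul, zero_div] at hmain
  exact (mul_eq_zero.mp hmain).resolve_left (Complex.exp_ne_zero _)


end Stmt5
end
end Stmt5Aux

/-- For `Re j > -1/2`, `n ∈ ℤ`, `ε ∈ {0,1}`:
`e^{-inπ/2} ∫₀^π (e^{inφ} + (-1)^ε e^{-inφ}) (2 sin φ)^{2j} dφ
  = 2π π^ε_n Γ(2j+1)/(Γ(1+j+n/2) Γ(1+j-n/2))`, where `π^ε_n = 1` iff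
`n ≡ ε (mod 2)`; in particular the integral vanishes when `n + ε` is odd. -/
theorem stmt_5 (j : ℂ) (hj : (-1/2 : ℝ) < j.re) (n : ℤ) (ε : ℤ) (hε : ε = 0 ∨ ε = 1) :
    Complex.exp (-(Complex.I * (n : ℂ) * (Real.pi : ℂ)) / 2) *
        ∫ φ in (0 : ℝ)..Real.pi,
          (Complex.exp (Complex.I * (n : ℂ) * (φ : ℂ)) +
              (-1 : ℂ) ^ ε * Complex.exp (-(Complex.I * (n : ℂ) * (φ : ℂ)))) *
            ((2 * Real.sin φ : ℝ) : ℂ) ^ (2 * j) =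
      2 * (Real.pi : ℂ) * (if n % 2 = ε % 2 then (1 : ℂ) else 0) *
        Complex.Gamma (2 * j + 1) /
        (Complex.Gamma (1 + j + (n : ℂ) / 2) * Complex.Gamma (1 + j - (n : ℂ) / 2)) ∧
    ((n + ε) % 2 = 1 →
      ∫ φ in (0 : ℝ)..Real.pi,
          (Complex.exp (Complex.I * (n : ℂ) * (φ : ℂ)) +
              (-1 : ℂ) ^ ε * Complex.exp (-(Complex.I * (n : ℂ) * (φ : ℂ)))) *
            ((2 * Real.sin φ : ℝ) : ℂ) ^ (2 * j) = 0) :=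
  Stmt5.final ‹_› _ _ ‹_›
end

section
/- For ψ, ν, χ ∈ ℝ let h(ψ,ν,χ) be the 2×2 complex matrix [[e^χ cosh ψ, sinh ψ + iν e^χ cosh ψ],[sinh ψ − iν e^χ cosh ψ, (e^{−χ} + ν² e^χ) cosh ψ]], and let ω = [[0,1],[1,0]]. Then h(ψ,ν,χ) is Hermitian with det h(ψ,ν,χ) = 1 and tr h(ψ,ν,χ) > 0 (so h(ψ,ν,χ) ∈ H₃⁺), and tr(ω · h(ψ,ν,χ)) = 2 sinh ψ. Consequently the map h ↦ tr(ω h) from H₃⁺ to ℝ is surjective. -/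
/-!
Expanding the determinant, the `ν`-terms cancel because `e^χ e^{-χ} = 1`, leaving
`cosh² ψ - sinh² ψ = 1`. Multiplying by `ω` swaps the rows, so `tr(ω h)` is the sum of the
off-diagonal entries, `2 sinh ψ`; surjectivity follows by taking `ψ = arsinh (c / 2)`.
-/

open Matrix

/-- The parametrization `h(ψ,ν,χ) = c(ν,χ) h_ψ c(ν,χ)†` of `H₃⁺`. -/
noncomputable def hmat (ψ ν χ : ℝ) : Matrix (Fin 2) (Fin 2) ℂ :=
  !![(Real.exp χ : ℂ) * (Real.cosh ψ : ℂ),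
     (Real.sinh ψ : ℂ) + Complex.I * (ν : ℂ) * (Real.exp χ : ℂ) * (Real.cosh ψ : ℂ);
     (Real.sinh ψ : ℂ) - Complex.I * (ν : ℂ) * (Real.exp χ : ℂ) * (Real.cosh ψ : ℂ),
     ((Real.exp (-χ) : ℂ) + (ν : ℂ) ^ 2 * (Real.exp χ : ℂ)) * (Real.cosh ψ : ℂ)]

namespace Matrix

theorem isHermitian_of_fin_two {α : Type*} [InvolutiveStar α] {A : Matrix (Fin 2) (Fin 2) α}
    (h₀₀ : star (A 0 0) = A 0 0) (h₀₁ : star (A 0 1) = A 1 0) (h₁₁ : star (A 1 1) = A 1 1) :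
    A.IsHermitian := by
  ext i j
  fin_cases i <;> fin_cases j
  · exact h₀₀
  · simp [← h₀₁]
  · exact h₀₁
  · exact h₁₁

theorem trace_swap_mul {R : Type*} [Semiring R] (A : Matrix (Fin 2) (Fin 2) R) :
    (!![(0 : R), 1; 1, 0] * A).trace = A 0 1 + A 1 0 := by
  rw [trace_fin_two]
  simp [mul_apply, Fin.sum_univ_two, add_comm]

end Matrix

section Parametrization

variable (ψ ν χ : ℝ)

theorem hmat_isHermitian : (hmat ψ ν χ).IsHermitian := by
  apply isHermitian_of_fin_two <;>
    simp only [hmat, of_apply, cons_val', cons_val_zero, cons_val_one, empty_val',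
      cons_val_fin_one, Complex.star_def, map_add, map_mul, map_pow, Complex.conj_ofReal,
      Complex.conj_I]
  ring

theorem hmat_det : (hmat ψ ν χ).det = 1 := by
  have hexp : (Real.exp χ : ℂ) * (Real.exp (-χ) : ℂ) = 1 := by
    rw [← Complex.ofReal_mul, ← Real.exp_add, add_neg_cancel, Real.exp_zero, Complex.ofReal_one]
  have hcosh : (Real.cosh ψ : ℂ) ^ 2 - (Real.sinh ψ : ℂ) ^ 2 = 1 := by
    exact_mod_cast Real.cosh_sq_sub_sinh_sq ψ
  rw [hmat, det_fin_two_of]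
  linear_combination (Real.cosh ψ : ℂ) ^ 2 * hexp + hcosh +
    ((ν : ℂ) * (Real.exp χ : ℂ) * (Real.cosh ψ : ℂ)) ^ 2 * Complex.I_sq

theorem hmat_trace :
    (hmat ψ ν χ).trace =
      (((Real.exp χ + Real.exp (-χ) + ν ^ 2 * Real.exp χ) * Real.cosh ψ : ℝ) : ℂ) := by
  rw [hmat, trace_fin_two_of]
  push_cast
  ring

theorem hmat_trace_re_pos : 0 < (hmat ψ ν χ).trace.re := by
  rw [hmat_trace, Complex.ofReal_re]
  positivity

theorem hmat_trace_im : (hmat ψ ν χ).trace.im = 0 := by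
  rw [hmat_trace, Complex.ofReal_im]

theorem trace_swap_mul_hmat :
    (!![(0 : ℂ), 1; 1, 0] * hmat ψ ν χ).trace = ((2 * Real.sinh ψ : ℝ) : ℂ) := by
  rw [trace_swap_mul]
  simp only [hmat, of_apply, cons_val', cons_val_zero, cons_val_one, empty_val',
    cons_val_fin_one]
  push_cast
  ring

end Parametrization

/-- Every `h(ψ,ν,χ)` lies in `H₃⁺` and satisfies
`tr(ω h(ψ,ν,χ)) = 2 sinh ψ` with `ω = [[0,1],[1,0]]`; consequently
`h ↦ tr(ω h)` maps `H₃⁺` onto `ℝ`. -/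
theorem stmt_14 :
    (∀ ψ ν χ : ℝ,
      (hmat ψ ν χ).IsHermitian ∧ (hmat ψ ν χ).det = 1 ∧
        0 < (hmat ψ ν χ).trace.re ∧ (hmat ψ ν χ).trace.im = 0 ∧
        (!![(0 : ℂ), 1; 1, 0] * hmat ψ ν χ).trace = ((2 * Real.sinh ψ : ℝ) : ℂ)) ∧
    (∀ c : ℝ, ∃ h : Matrix (Fin 2) (Fin 2) ℂ,
      h.IsHermitian ∧ h.det = 1 ∧ 0 < h.trace.re ∧
        (!![(0 : ℂ), 1; 1, 0] * h).trace = (c : ℂ)) := by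
  refine ⟨fun ψ ν χ => ⟨hmat_isHermitian ψ ν χ, hmat_det ψ ν χ, hmat_trace_re_pos ψ ν χ,
    hmat_trace_im ψ ν χ, trace_swap_mul_hmat ψ ν χ⟩, fun c => ?_⟩
  refine ⟨hmat (Real.arsinh (c / 2)) 0 0, hmat_isHermitian _ _ _, hmat_det _ _ _,
    hmat_trace_re_pos _ _ _, ?_⟩
  rw [trace_swap_mul_hmat, Real.sinh_arsinh]
  push_cast
  ring
end
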